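/- arXiv:1906.07830 — 4 statements merged into one kernel-verified Lean document; each statement's English description precedes it below -/
import Mathlib

section
/- Let G be an elementary abelian 2-group of rank 3, with basis a, b, c. Then χ(G) is nilpotent of class exactly 3, the subgroup D(G) = ⟨[a,b^φ], [a,c^φ], [b,c^φ], [a,b^φ,c]⟩ is elementary abelian of order 16, and [D(G), G] = ⟨[a,b^φ,c]⟩ has order 2; in particular, D(G) is not powerfully embedded in χ(G) (for p = 2, [D(G), χ(G)] is not contained in D(G)^4 = 1). -/
open Monoid Coprod

/-- Commutator `[x, y] = x⁻¹ * y⁻¹ * x * y`. -/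
def comm' {G : Type*} [Group G] (x y : G) : G := x⁻¹ * y⁻¹ * x * y

/-- Relators of the presentation of `χ(G)`: `[g, g^φ] = 1` for all `g ∈ G`. -/
def chiRels (G : Type*) [Group G] : Set (Monoid.Coprod G G) :=
  { r | ∃ g : G, r = comm' (inl g) (inr g) }

/-- The weak commutativity group `χ(G)`, the quotient of the free product `G ∗ G^φ`
by the normal closure of `{[g, g^φ] : g ∈ G}`. -/
abbrev chi (G : Type*) [Group G] : Type _ :=
  Monoid.Coprod G G ⧸ Subgroup.normalClosure (chiRels G)

/-- The canonical projection `G ∗ G^φ → χ(G)`. -/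
def chiMk (G : Type*) [Group G] : Monoid.Coprod G G →* chi G :=
  QuotientGroup.mk' _

/-- The image of `G` in `χ(G)`. -/
def chiIota (G : Type*) [Group G] : G →* chi G := (chiMk G).comp inl

/-- The image of `G^φ` in `χ(G)`. -/
def chiIotaPhi (G : Type*) [Group G] : G →* chi G := (chiMk G).comp inr

/-- The subgroup `D(G) = [G, G^φ]` of `χ(G)`. -/
def DSubgroup (G : Type*) [Group G] : Subgroup (chi G) :=
  ⁅(chiIota G).range, (chiIotaPhi G).range⁆

/-- `spow H n` is the subgroup `H^n` generated by all `n`-th powers of elements of `H`. -/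
def spow {G : Type*} [Group G] (H : Subgroup G) (n : ℕ) : Subgroup G :=
  Subgroup.closure {x | ∃ h ∈ H, x = h ^ n}

/-- A finite `p`-group `G` is potent if `γ_{p-1}(G) ≤ G^p` for odd `p`,
or `G' ≤ G^4` for `p = 2`.  (Here `γ_k(G)` is `lowerCentralSeries G (k-1)`.) -/
def IsPotent (p : ℕ) (G : Type*) [Group G] : Prop :=
  if p = 2 then (⊤ : Subgroup G).lowerCentralSeries 1 ≤ spow (⊤ : Subgroup G) 4
  else (⊤ : Subgroup G).lowerCentralSeries (p - 2) ≤ spow (⊤ : Subgroup G) p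

/-- A finite `p`-group `G` is powerful if `G' ≤ G^p` for odd `p`, or `G' ≤ G^4` for `p = 2`. -/
def IsPowerful (p : ℕ) (G : Type*) [Group G] : Prop :=
  if p = 2 then (⊤ : Subgroup G).lowerCentralSeries 1 ≤ spow (⊤ : Subgroup G) 4
  else (⊤ : Subgroup G).lowerCentralSeries 1 ≤ spow (⊤ : Subgroup G) p

/-!
Write `δ(x, y) = [x, y^φ]` (`chiComm`) and `τ(x, y, z) = [δ(x, y), z]` (`chiTriple`); as `G` has
exponent `2`, all generators of `χ(G)` are involutions. Expanding the relation
`[xy, (xy)^φ] = 1` shows that `δ(x, y) = δ(y, x)` is an involution commuting with `x, y, x^φ, y^φ`.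
Expanding `δ(xy, z)` once from the left and once from the right then shows that `τ` is a symmetric
involution, that it equals `[δ(x, y), z^φ]` and is central, and that the `δ`'s commute. So `D(G)` is
generated by the four commuting involutions `δ(a,b), δ(a,c), δ(b,c), τ(a,b,c)`, it contains
`χ(G)'`, and `[D(G), χ(G)] = ⟨τ(a,b,c)⟩` is central. The lower bounds `|D(G)| = 16` and
`τ(a,b,c) ≠ 1` come from an explicit permutation representation of degree `32`.
-/

open scoped commutatorElement

section GroupLemmas

variable {Γ : Type*} [Group Γ] {g x y : Γ}

theorem comm'_eq_commutatorElement (hx : x * x = 1) (hy : y * y = 1) : comm' x y = ⁅x, y⁆ := by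
  rw [comm', commutatorElement_def, inv_eq_of_mul_eq_one_right hx,
    inv_eq_of_mul_eq_one_right hy]

theorem comm'_eq_one_iff : comm' x y = 1 ↔ Commute x y := by
  rw [comm', ← Commute.inv_inv_iff, ← commutatorElement_eq_one_iff_commute, commutatorElement_def,
    inv_inv, inv_inv]

theorem map_comm' {Δ : Type*} [Group Δ] (f : Γ →* Δ) (x y : Γ) :
    f (comm' x y) = comm' (f x) (f y) := by
  simp only [comm', map_mul, map_inv]

theorem commute_of_mul_self_eq_one (hx : x * x = 1) (hy : y * y = 1)
    (hxy : x * y * (x * y) = 1) : Commute x y := by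
  have h := inv_eq_of_mul_eq_one_right hxy
  rwa [mul_inv_rev, inv_eq_of_mul_eq_one_right hx, inv_eq_of_mul_eq_one_right hy, eq_comm] at h

theorem conj_mul_self_eq_one (g : Γ) (hx : x * x = 1) : g * x * g⁻¹ * (g * x * g⁻¹) = 1 := by
  rw [show g * x * g⁻¹ * (g * x * g⁻¹) = g * (x * x) * g⁻¹ by group, hx, mul_one, mul_inv_cancel]

theorem commutatorElement_eq_mul_conj (hx : x * x = 1) (g : Γ) : ⁅x, g⁆ = x * (g * x * g⁻¹) := by
  rw [commutatorElement_def, inv_eq_of_mul_eq_one_right hx, mul_assoc, mul_assoc, mul_assoc]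

theorem Commute.commutatorElement_right (hx : Commute g x) (hy : Commute g y) :
    Commute g ⁅x, y⁆ := by
  rw [commutatorElement_def]
  exact ((hx.mul_right hy).mul_right hx.inv_right).mul_right hy.inv_right

theorem Subgroup.commutator_closure_le {N : Subgroup Γ} [N.Normal] {R S : Set Γ}
    (h : ∀ r ∈ R, ∀ s ∈ S, ⁅r, s⁆ ∈ N) : ⁅Subgroup.closure R, Subgroup.closure S⁆ ≤ N := by
  rw [← QuotientGroup.ker_mk' N, ← Subgroup.map_eq_bot_iff, Subgroup.map_commutator,
    MonoidHom.map_closure, MonoidHom.map_closure, Subgroup.commutator_eq_bot_iff_le_centralizer,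
    Subgroup.centralizer_closure, Subgroup.closure_le]
  rintro _ ⟨r, hr, rfl⟩ _ ⟨s, hs, rfl⟩
  refine (commutatorElement_eq_one_iff_mul_comm.mp ?_).symm
  rw [← map_commutatorElement, ← MonoidHom.mem_ker, QuotientGroup.ker_mk']
  exact h r hr s hs

theorem spow_four_eq_bot {H : Subgroup Γ} (hH : ∀ x ∈ H, x * x = 1) : spow H 4 = ⊥ := by
  rw [spow, eq_bot_iff, Subgroup.closure_le]
  rintro _ ⟨h, hh, rfl⟩
  rw [SetLike.mem_coe, Subgroup.mem_bot, show 4 = 2 * 2 from rfl, pow_mul, sq h, hH h hh, one_pow]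

end GroupLemmas

section ChiGeneral

variable {G : Type*} [Group G]

theorem commute_chiIota_chiIotaPhi (g : G) : Commute (chiIota G g) (chiIotaPhi G g) := by
  have h : chiMk G (comm' (inl g) (inr g)) = 1 :=
    (QuotientGroup.eq_one_iff _).mpr (Subgroup.subset_normalClosure ⟨g, rfl⟩)
  rwa [map_comm', comm'_eq_one_iff] at h

def chiLift {K : Type*} [Group K] (f f' : G →* K) (h : ∀ g, Commute (f g) (f' g)) :
    chi G →* K :=
  QuotientGroup.lift _ (Coprod.lift f f') <| Subgroup.normalClosure_le_normal <| by
    rintro _ ⟨g, rfl⟩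
    rw [SetLike.mem_coe, MonoidHom.mem_ker, map_comm', Coprod.lift_apply_inl,
      Coprod.lift_apply_inr, comm'_eq_one_iff]
    exact h g

@[simp]
theorem chiLift_chiIota {K : Type*} [Group K] (f f' : G →* K) (h : ∀ g, Commute (f g) (f' g))
    (g : G) : chiLift f f' h (chiIota G g) = f g :=
  Coprod.lift_apply_inl f f' g

@[simp]
theorem chiLift_chiIotaPhi {K : Type*} [Group K] (f f' : G →* K) (h : ∀ g, Commute (f g) (f' g))
    (g : G) : chiLift f f' h (chiIotaPhi G g) = f' g :=
  Coprod.lift_apply_inr f f' g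

theorem closure_image_chiIota_union_image_chiIotaPhi {X : Set G}
    (hX : Subgroup.closure X = ⊤) :
    Subgroup.closure (chiIota G '' X ∪ chiIotaPhi G '' X) = ⊤ := by
  rw [Subgroup.closure_union, ← MonoidHom.map_closure, ← MonoidHom.map_closure, hX,
    ← MonoidHom.range_eq_map, ← MonoidHom.range_eq_map, chiIota, chiIotaPhi, ← Coprod.range_eq,
    MonoidHom.range_eq_top]
  exact QuotientGroup.mk'_surjective _

end ChiGeneral

section ChiCommutators

variable {G : Type*} [Group G]

def chiComm (x y : G) : chi G := ⁅chiIota G x, chiIotaPhi G y⁆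

def chiTriple (x y z : G) : chi G := ⁅chiComm x y, chiIota G z⁆

theorem chiComm_mem_DSubgroup (x y : G) : chiComm x y ∈ DSubgroup G :=
  Subgroup.commutator_mem_commutator ⟨x, rfl⟩ ⟨y, rfl⟩

theorem chiComm_mul_left (x y z : G) :
    chiComm (x * y) z = chiIota G x * chiComm y z * (chiIota G x)⁻¹ * chiComm x z := by
  rw [chiComm, map_mul, commutatorElement_mul_left_eq_conj_mul]
  rfl

theorem chiComm_mul_right (x y z : G) :
    chiComm z (x * y) = chiComm z x * chiIotaPhi G x * chiComm z y * (chiIotaPhi G x)⁻¹ := by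
  rw [chiComm, map_mul, commutatorElement_mul_right_eq_mul_conj]
  rfl

theorem chiTriple_eq_chiComm_mul (x y z : G) :
    chiTriple x y z = chiComm x y * (chiComm (z * x) y * (chiComm z y)⁻¹)⁻¹ := by
  rw [chiTriple, commutatorElement_def, chiComm_mul_left]
  group

theorem chiTriple_mem_DSubgroup (x y z : G) : chiTriple x y z ∈ DSubgroup G := by
  rw [chiTriple_eq_chiComm_mul]
  exact mul_mem (chiComm_mem_DSubgroup x y)
    (inv_mem (mul_mem (chiComm_mem_DSubgroup _ y) (inv_mem (chiComm_mem_DSubgroup z y))))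

theorem chiTriple_mem_lowerCentralSeries_two (x y z : G) :
    chiTriple x y z ∈ (⊤ : Subgroup (chi G)).lowerCentralSeries 2 :=
  Subgroup.commutator_mem_commutator
    (Subgroup.commutator_mem_commutator (Subgroup.mem_top _) (Subgroup.mem_top _))
    (Subgroup.mem_top _)

theorem chiComm_mul_chiComm_swap {x y : G} (h : Commute x y) :
    chiComm y x * chiComm x y = 1 := by
  have h1 := (commute_chiIota_chiIotaPhi (x * y)).commutator_eq
  rw [map_mul, map_mul, commutatorElement_mul_left_eq_conj_mul,
    commutatorElement_mul_right_eq_mul_conj, commutatorElement_mul_right_eq_mul_conj,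
    (commute_chiIota_chiIotaPhi y).commutator_eq, (commute_chiIota_chiIotaPhi x).commutator_eq,
    mul_one, mul_inv_cancel_right, one_mul] at h1
  have hx : Commute (chiIota G x) (chiComm y x) :=
    (h.map _).commutatorElement_right (commute_chiIota_chiIotaPhi x)
  have hx' : Commute (chiIotaPhi G x) (chiComm x y) :=
    (commute_chiIota_chiIotaPhi x).symm.commutatorElement_right (h.map _)
  rwa [← chiComm, ← chiComm, hx.mul_inv_cancel, hx'.mul_inv_cancel] at h1

end ChiCommutators

section ExponentTwo

variable {G : Type*} [Group G]

theorem commute_of_forall_mul_self_eq_one (hG : ∀ g : G, g * g = 1) (x y : G) : Commute x y :=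
  Commute.of_orderOf_dvd_two (fun g => orderOf_dvd_of_pow_eq_one (by rw [sq, hG])) x y

theorem chiIota_mul_self (hG : ∀ g : G, g * g = 1) (x : G) : chiIota G x * chiIota G x = 1 := by
  rw [← map_mul, hG, map_one]

theorem chiIotaPhi_mul_self (hG : ∀ g : G, g * g = 1) (x : G) :
    chiIotaPhi G x * chiIotaPhi G x = 1 := by
  rw [← map_mul, hG, map_one]

theorem commute_chiIota_chiComm_right (hG : ∀ g : G, g * g = 1) (x y : G) :
    Commute (chiIota G y) (chiComm x y) :=
  ((commute_of_forall_mul_self_eq_one hG y x).map _).commutatorElement_right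
    (commute_chiIota_chiIotaPhi y)

theorem commute_chiIotaPhi_chiComm_left (hG : ∀ g : G, g * g = 1) (x y : G) :
    Commute (chiIotaPhi G x) (chiComm x y) :=
  (commute_chiIota_chiIotaPhi x).symm.commutatorElement_right
    ((commute_of_forall_mul_self_eq_one hG x y).map _)

theorem chiComm_comm (hG : ∀ g : G, g * g = 1) (x y : G) : chiComm y x = chiComm x y := by
  have hinv : (chiIota G x)⁻¹ = chiIota G x := inv_eq_of_mul_eq_one_right (chiIota_mul_self hG x)
  calc chiComm y x
      = (chiIota G x)⁻¹ * chiComm y x * chiIota G x :=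
        (commute_chiIota_chiComm_right hG y x).inv_mul_cancel.symm
    _ = (chiIota G x)⁻¹ * (chiComm x y)⁻¹ * chiIota G x := by
        rw [eq_inv_of_mul_eq_one_left
          (chiComm_mul_chiComm_swap (commute_of_forall_mul_self_eq_one hG x y))]
    _ = chiComm x y := by
        rw [chiComm, commutatorElement_inv, ← commutatorElement_inv_left, hinv]

theorem commute_chiIota_chiComm_left (hG : ∀ g : G, g * g = 1) (x y : G) :
    Commute (chiIota G x) (chiComm x y) :=
  chiComm_comm hG x y ▸ commute_chiIota_chiComm_right hG y x

theorem commute_chiIotaPhi_chiComm_right (hG : ∀ g : G, g * g = 1) (x y : G) :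
    Commute (chiIotaPhi G y) (chiComm x y) :=
  chiComm_comm hG x y ▸ commute_chiIotaPhi_chiComm_left hG y x

theorem chiComm_mul_self (hG : ∀ g : G, g * g = 1) (x y : G) :
    chiComm x y * chiComm x y = 1 := by
  nth_rw 1 [← chiComm_comm hG]
  exact chiComm_mul_chiComm_swap (commute_of_forall_mul_self_eq_one hG x y)

theorem commute_conj_chiComm (hG : ∀ g : G, g * g = 1) (x y z : G) :
    Commute (chiIota G x * chiComm y z * (chiIota G x)⁻¹) (chiComm x z) :=
  commute_of_mul_self_eq_one (conj_mul_self_eq_one _ (chiComm_mul_self hG y z))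
    (chiComm_mul_self hG x z) (by rw [← chiComm_mul_left, chiComm_mul_self hG])

theorem conj_chiIota_chiComm (hG : ∀ g : G, g * g = 1) (x y z : G) :
    chiIota G x * chiComm y z * (chiIota G x)⁻¹ =
      chiIotaPhi G x * chiComm y z * (chiIotaPhi G x)⁻¹ := by
  have h1 : chiComm (x * y) z = chiComm x z * (chiIota G x * chiComm y z * (chiIota G x)⁻¹) := by
    rw [chiComm_mul_left, (commute_conj_chiComm hG x y z).eq]
  have h2 : chiComm (x * y) z =
      chiComm x z * (chiIotaPhi G x * chiComm y z * (chiIotaPhi G x)⁻¹) := by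
    rw [chiComm_comm hG z (x * y), chiComm_mul_right, chiComm_comm hG x z, chiComm_comm hG y z]
    group
  exact mul_left_cancel (h1.symm.trans h2)

theorem commutatorElement_chiComm_chiIotaPhi (hG : ∀ g : G, g * g = 1) (x y z : G) :
    ⁅chiComm x y, chiIotaPhi G z⁆ = chiTriple x y z := by
  rw [chiTriple, commutatorElement_eq_mul_conj (chiComm_mul_self hG x y),
    commutatorElement_eq_mul_conj (chiComm_mul_self hG x y), conj_chiIota_chiComm hG]

theorem conj_chiComm_mul_chiComm (hG : ∀ g : G, g * g = 1) (x y z : G) :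
    chiIota G y * chiComm x z * (chiIota G y)⁻¹ * chiComm y z =
      chiComm x z * (chiIota G x * chiComm y z * (chiIota G x)⁻¹) := by
  rw [← chiComm_mul_left, (commute_of_forall_mul_self_eq_one hG y x).eq, chiComm_mul_left,
    (commute_conj_chiComm hG x y z).eq]

theorem chiTriple_mul_chiTriple (hG : ∀ g : G, g * g = 1) (x y z : G) :
    chiTriple x z y * chiTriple y z x = 1 := by
  rw [chiTriple, chiTriple, commutatorElement_eq_mul_conj (chiComm_mul_self hG x z),
    commutatorElement_eq_mul_conj (chiComm_mul_self hG y z)]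
  calc chiComm x z * (chiIota G y * chiComm x z * (chiIota G y)⁻¹) *
        (chiComm y z * (chiIota G x * chiComm y z * (chiIota G x)⁻¹))
      = chiComm x z * (chiIota G y * chiComm x z * (chiIota G y)⁻¹ * chiComm y z) *
          (chiIota G x * chiComm y z * (chiIota G x)⁻¹) := by
        simp only [mul_assoc]
    _ = 1 := by
        rw [conj_chiComm_mul_chiComm hG, ← mul_assoc (chiComm x z) (chiComm x z),
          chiComm_mul_self hG, one_mul,
          conj_mul_self_eq_one _ (chiComm_mul_self hG y z)]

theorem chiTriple_comm (hG : ∀ g : G, g * g = 1) (x y z : G) :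
    chiTriple y x z = chiTriple x y z := by
  rw [chiTriple, chiTriple, chiComm_comm hG]

theorem chiTriple_swap (hG : ∀ g : G, g * g = 1) (x y z : G) :
    chiTriple x z y = chiTriple x y z := by
  have h1 := chiTriple_mul_chiTriple hG x y z
  have h2 := chiTriple_mul_chiTriple hG x z y
  rw [chiTriple_comm hG y z x] at h2
  exact mul_right_cancel (h1.trans h2.symm)

theorem chiTriple_mul_self (hG : ∀ g : G, g * g = 1) (x y z : G) :
    chiTriple x y z * chiTriple x y z = 1 := by
  have h := chiTriple_mul_chiTriple hG y z x
  rwa [chiTriple_comm hG x y z, chiTriple_comm hG x z y, chiTriple_swap hG x y z] at h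

theorem commute_chiIota_chiTriple (hG : ∀ g : G, g * g = 1) (x y z : G) :
    Commute (chiIota G x) (chiTriple x y z) :=
  (commute_chiIota_chiComm_left hG x y).commutatorElement_right
    ((commute_of_forall_mul_self_eq_one hG x z).map _)

theorem commute_chiIotaPhi_chiTriple (hG : ∀ g : G, g * g = 1) (x y z : G) :
    Commute (chiIotaPhi G x) (chiTriple x y z) := by
  rw [← commutatorElement_chiComm_chiIotaPhi hG]
  exact (commute_chiIotaPhi_chiComm_left hG x y).commutatorElement_right
    ((commute_of_forall_mul_self_eq_one hG x z).map _)

theorem commute_chiTriple_chiIota (hG : ∀ g : G, g * g = 1) {x y z w : G}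
    (hw : w ∈ ({x, y, z} : Set G)) : Commute (chiTriple x y z) (chiIota G w) := by
  rcases hw with rfl | rfl | rfl
  · exact (commute_chiIota_chiTriple hG w y z).symm
  · rw [← chiTriple_comm hG]
    exact (commute_chiIota_chiTriple hG w x z).symm
  · rw [← chiTriple_swap hG, ← chiTriple_comm hG]
    exact (commute_chiIota_chiTriple hG w x y).symm

theorem commute_chiTriple_chiIotaPhi (hG : ∀ g : G, g * g = 1) {x y z w : G}
    (hw : w ∈ ({x, y, z} : Set G)) : Commute (chiTriple x y z) (chiIotaPhi G w) := by
  rcases hw with rfl | rfl | rfl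
  · exact (commute_chiIotaPhi_chiTriple hG w y z).symm
  · rw [← chiTriple_comm hG]
    exact (commute_chiIotaPhi_chiTriple hG w x z).symm
  · rw [← chiTriple_swap hG, ← chiTriple_comm hG]
    exact (commute_chiIotaPhi_chiTriple hG w x y).symm

theorem commute_chiComm_chiComm (hG : ∀ g : G, g * g = 1) (x y z : G) :
    Commute (chiComm x z) (chiComm y z) := by
  have h1 := commute_conj_chiComm hG y x z
  have h2 : chiIota G y * chiComm x z * (chiIota G y)⁻¹ = chiComm x z * chiTriple x z y := by
    rw [chiTriple, commutatorElement_eq_mul_conj (chiComm_mul_self hG x z), ← mul_assoc,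
      chiComm_mul_self hG, one_mul]
  have h3 : Commute (chiTriple x z y) (chiComm y z) :=
    (commute_chiTriple_chiIota hG (by simp)).commutatorElement_right
      (commute_chiTriple_chiIotaPhi hG (by simp))
  rw [h2] at h1
  simpa using h1.mul_left h3.inv_left

end ExponentTwo

section InvolutionHoms

variable {Γ Δ : Type*} [Group Γ] [Group Δ]

def involutionHom (x : Γ) (hx : x * x = 1) : Multiplicative (ZMod 2) →* Γ where
  toFun v := x ^ (Multiplicative.toAdd v).val
  map_one' := pow_zero x
  map_mul' u v := by
    rw [toAdd_mul, ZMod.val_add, ← pow_eq_pow_mod _ (by rwa [sq]), pow_add]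

theorem involutionHom_ofAdd_one (x : Γ) (hx : x * x = 1) :
    involutionHom x hx (Multiplicative.ofAdd 1) = x :=
  pow_one x

variable {ι : Type*} [Fintype ι]

def commInvolutionsHom (x : ι → Γ) (hx : ∀ i, x i * x i = 1)
    (hc : Pairwise fun i j => Commute (x i) (x j)) : (ι → Multiplicative (ZMod 2)) →* Γ :=
  MonoidHom.noncommPiCoprod (fun i => involutionHom (x i) (hx i))
    (hc.mono fun _ _ h _ _ => h.pow_pow _ _)

variable {x : ι → Γ} {hx : ∀ i, x i * x i = 1} {hc : Pairwise fun i j => Commute (x i) (x j)}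

theorem commInvolutionsHom_mulSingle [DecidableEq ι] (i : ι) :
    commInvolutionsHom x hx hc (Pi.mulSingle i (Multiplicative.ofAdd 1)) = x i := by
  rw [commInvolutionsHom, MonoidHom.noncommPiCoprod_mulSingle, involutionHom_ofAdd_one]

theorem range_commInvolutionsHom :
    (commInvolutionsHom x hx hc).range = Subgroup.closure (Set.range x) := by
  classical
  refine le_antisymm ?_ ((Subgroup.closure_le _).mpr ?_)
  · rw [commInvolutionsHom, MonoidHom.noncommPiCoprod_range, iSup_le_iff]
    rintro i _ ⟨v, rfl⟩
    exact pow_mem (Subgroup.subset_closure (Set.mem_range_self i)) _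
  · rintro _ ⟨i, rfl⟩
    exact ⟨Pi.mulSingle i (Multiplicative.ofAdd 1), commInvolutionsHom_mulSingle i⟩

theorem comp_commInvolutionsHom (f : Γ →* Δ) {y : ι → Δ} {hy : ∀ i, y i * y i = 1}
    {hc' : Pairwise fun i j => Commute (y i) (y j)} (hfy : ∀ i, f (x i) = y i) :
    f.comp (commInvolutionsHom x hx hc) = commInvolutionsHom y hy hc' := by
  obtain rfl : y = f ∘ x := funext fun i => (hfy i).symm
  refine (MonoidHom.comp_noncommPiCoprod _ (f := f)).trans ?_
  unfold commInvolutionsHom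
  congr
  ext i v
  exact map_pow f _ _

theorem mul_self_eq_one_of_mem_range_commInvolutionsHom {g : Γ}
    (hg : g ∈ (commInvolutionsHom x hx hc).range) : g * g = 1 := by
  obtain ⟨v, rfl⟩ := hg
  have hv : v * v = 1 := funext fun i => by
    rw [Pi.mul_apply, Pi.one_apply]
    generalize v i = u
    revert u
    decide
  rw [← map_mul, hv, map_one]

end InvolutionHoms

section RankThree

variable {G : Type*} [Group G]

theorem chiComm_self (x : G) : chiComm x x = 1 :=
  (commute_chiIota_chiIotaPhi x).commutator_eq

theorem commutator_top_le_of_chiComm_mem (hG : ∀ g : G, g * g = 1) {X : Set G}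
    (hX : Subgroup.closure X = ⊤) {N : Subgroup (chi G)} [N.Normal]
    (h : ∀ x ∈ X, ∀ y ∈ X, chiComm x y ∈ N) : ⁅(⊤ : Subgroup (chi G)), ⊤⁆ ≤ N := by
  rw [← closure_image_chiIota_union_image_chiIotaPhi hX]
  refine Subgroup.commutator_closure_le ?_
  rintro _ (⟨x, hx, rfl⟩ | ⟨x, hx, rfl⟩) _ (⟨y, hy, rfl⟩ | ⟨y, hy, rfl⟩)
  · rw [((commute_of_forall_mul_self_eq_one hG x y).map _).commutator_eq]
    exact one_mem N
  · exact h x hx y hy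
  · rw [← commutatorElement_inv]
    exact inv_mem (h y hy x hx)
  · rw [((commute_of_forall_mul_self_eq_one hG x y).map _).commutator_eq]
    exact one_mem N

theorem commutatorElement_chiComm_mem_closure (hG : ∀ g : G, g * g = 1) {x y z w : G}
    (hw : w ∈ ({x, y, z} : Set G)) :
    ⁅chiComm x y, chiIota G w⁆ ∈ Subgroup.closure {chiTriple x y z} ∧
      ⁅chiComm x y, chiIotaPhi G w⁆ ∈ Subgroup.closure {chiTriple x y z} := by
  rcases hw with rfl | rfl | rfl
  · rw [(commute_chiIota_chiComm_left hG w y).symm.commutator_eq,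
      (commute_chiIotaPhi_chiComm_left hG w y).symm.commutator_eq]
    exact ⟨one_mem _, one_mem _⟩
  · rw [(commute_chiIota_chiComm_right hG x w).symm.commutator_eq,
      (commute_chiIotaPhi_chiComm_right hG x w).symm.commutator_eq]
    exact ⟨one_mem _, one_mem _⟩
  · rw [commutatorElement_chiComm_chiIotaPhi hG]
    exact ⟨Subgroup.subset_closure rfl, Subgroup.subset_closure rfl⟩

variable {a b c : G}

theorem closure_chiTriple_le_center (hG : ∀ g : G, g * g = 1)
    (hbasis : Subgroup.closure {a, b, c} = ⊤) :
    Subgroup.closure {chiTriple a b c} ≤ Subgroup.center (chi G) := by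
  rw [← Subgroup.commutator_top_right_eq_bot_iff_le_center, eq_bot_iff,
    ← closure_image_chiIota_union_image_chiIotaPhi hbasis]
  refine Subgroup.commutator_closure_le ?_
  rintro _ rfl _ (⟨w, hw, rfl⟩ | ⟨w, hw, rfl⟩)
  · exact (commute_chiTriple_chiIota hG hw).commutator_eq ▸ one_mem _
  · exact (commute_chiTriple_chiIotaPhi hG hw).commutator_eq ▸ one_mem _

theorem commutator_closure_chiComm_le (hG : ∀ g : G, g * g = 1)
    (hbasis : Subgroup.closure {a, b, c} = ⊤) :
    ⁅Subgroup.closure {chiComm a b, chiComm a c, chiComm b c, chiTriple a b c}, ⊤⁆ ≤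
      Subgroup.closure {chiTriple a b c} := by
  have hcenter := closure_chiTriple_le_center hG hbasis
  have : (Subgroup.closure {chiTriple a b c}).Normal := by
    rw [← Subgroup.commutator_top_right_le_iff,
      Subgroup.commutator_top_right_eq_bot_iff_le_center.mpr hcenter]
    exact bot_le
  have hac : chiTriple a c b = chiTriple a b c := chiTriple_swap hG a b c
  have hbc : chiTriple b c a = chiTriple a b c := by
    rw [chiTriple_swap hG, chiTriple_comm hG]
  have hgens : ∀ w ∈ ({a, b, c} : Set G),
      ∀ r ∈ ({chiComm a b, chiComm a c, chiComm b c, chiTriple a b c} : Set (chi G)),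
        ⁅r, chiIota G w⁆ ∈ Subgroup.closure {chiTriple a b c} ∧
          ⁅r, chiIotaPhi G w⁆ ∈ Subgroup.closure {chiTriple a b c} := by
    intro w hw r hr
    rcases hr with rfl | rfl | rfl | rfl
    · exact commutatorElement_chiComm_mem_closure hG hw
    · rw [← hac]
      exact commutatorElement_chiComm_mem_closure hG (by rcases hw with rfl | rfl | rfl <;> simp)
    · rw [← hbc]
      exact commutatorElement_chiComm_mem_closure hG (by rcases hw with rfl | rfl | rfl <;> simp)
    · rw [(commute_chiTriple_chiIota hG hw).commutator_eq,
        (commute_chiTriple_chiIotaPhi hG hw).commutator_eq]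
      exact ⟨one_mem _, one_mem _⟩
  rw [← closure_image_chiIota_union_image_chiIotaPhi hbasis]
  refine Subgroup.commutator_closure_le ?_
  rintro r hr _ (⟨w, hw, rfl⟩ | ⟨w, hw, rfl⟩)
  exacts [(hgens w hw r hr).1, (hgens w hw r hr).2]

theorem chiComm_mem_closure (hG : ∀ g : G, g * g = 1) {x y : G}
    (hx : x ∈ ({a, b, c} : Set G)) (hy : y ∈ ({a, b, c} : Set G)) :
    chiComm x y ∈
      Subgroup.closure {chiComm a b, chiComm a c, chiComm b c, chiTriple a b c} := by
  have hswap : ∀ x y : G, chiComm x y ∈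
      Subgroup.closure {chiComm a b, chiComm a c, chiComm b c, chiTriple a b c} →
        chiComm y x ∈ Subgroup.closure {chiComm a b, chiComm a c, chiComm b c, chiTriple a b c} :=
    fun x y h => by rwa [chiComm_comm hG x y]
  rcases hx with rfl | rfl | rfl <;> rcases hy with rfl | rfl | rfl <;>
    first
    | (rw [chiComm_self]; exact one_mem _)
    | (apply Subgroup.subset_closure; simp; done)
    | (apply hswap; apply Subgroup.subset_closure; simp)

theorem normal_closure_chiComm (hG : ∀ g : G, g * g = 1)
    (hbasis : Subgroup.closure {a, b, c} = ⊤) :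
    (Subgroup.closure {chiComm a b, chiComm a c, chiComm b c, chiTriple a b c}).Normal := by
  rw [← Subgroup.commutator_top_right_le_iff]
  exact (commutator_closure_chiComm_le hG hbasis).trans (Subgroup.closure_mono (by simp))

theorem commutator_top_le_closure_chiComm (hG : ∀ g : G, g * g = 1)
    (hbasis : Subgroup.closure {a, b, c} = ⊤) :
    ⁅(⊤ : Subgroup (chi G)), ⊤⁆ ≤
      Subgroup.closure {chiComm a b, chiComm a c, chiComm b c, chiTriple a b c} :=
  have := normal_closure_chiComm hG hbasis
  commutator_top_le_of_chiComm_mem hG hbasis fun _ hx _ hy => chiComm_mem_closure hG hx hy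

theorem DSubgroup_eq_closure (hG : ∀ g : G, g * g = 1) (hbasis : Subgroup.closure {a, b, c} = ⊤) :
    DSubgroup G = Subgroup.closure {chiComm a b, chiComm a c, chiComm b c, chiTriple a b c} := by
  refine le_antisymm ((Subgroup.commutator_mono le_top le_top).trans
    (commutator_top_le_closure_chiComm hG hbasis)) ((Subgroup.closure_le _).mpr ?_)
  rintro _ (rfl | rfl | rfl | rfl)
  exacts [chiComm_mem_DSubgroup a b, chiComm_mem_DSubgroup a c, chiComm_mem_DSubgroup b c,
    chiTriple_mem_DSubgroup a b c]

theorem commutator_DSubgroup_top_le (hG : ∀ g : G, g * g = 1)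
    (hbasis : Subgroup.closure {a, b, c} = ⊤) :
    ⁅DSubgroup G, ⊤⁆ ≤ Subgroup.closure {chiTriple a b c} :=
  DSubgroup_eq_closure hG hbasis ▸ commutator_closure_chiComm_le hG hbasis

theorem lowerCentralSeries_three_eq_bot (hG : ∀ g : G, g * g = 1)
    (hbasis : Subgroup.closure {a, b, c} = ⊤) :
    (⊤ : Subgroup (chi G)).lowerCentralSeries 3 = ⊥ := by
  have h1 : (⊤ : Subgroup (chi G)).lowerCentralSeries 1 ≤ DSubgroup G :=
    DSubgroup_eq_closure hG hbasis ▸ commutator_top_le_closure_chiComm hG hbasis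
  have h2 : (⊤ : Subgroup (chi G)).lowerCentralSeries 2 ≤ Subgroup.closure {chiTriple a b c} :=
    (Subgroup.commutator_mono h1 le_rfl).trans (commutator_DSubgroup_top_le hG hbasis)
  rw [eq_bot_iff, ← Subgroup.commutator_top_right_eq_bot_iff_le_center.mpr
    (closure_chiTriple_le_center hG hbasis)]
  exact Subgroup.commutator_mono h2 le_rfl

def chiDGens (a b c : G) : Fin 4 → chi G :=
  ![chiComm a b, chiComm a c, chiComm b c, chiTriple a b c]

theorem chiDGens_mul_self (hG : ∀ g : G, g * g = 1) (i : Fin 4) :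
    chiDGens a b c i * chiDGens a b c i = 1 := by
  fin_cases i
  exacts [chiComm_mul_self hG a b, chiComm_mul_self hG a c, chiComm_mul_self hG b c,
    chiTriple_mul_self hG a b c]

theorem chiDGens_pairwise_commute (hG : ∀ g : G, g * g = 1)
    (hbasis : Subgroup.closure {a, b, c} = ⊤) :
    Pairwise fun i j => Commute (chiDGens a b c i) (chiDGens a b c j) := by
  have ht (g : chi G) : Commute g (chiTriple a b c) := Subgroup.mem_center_iff.mp
    (closure_chiTriple_le_center hG hbasis (Subgroup.subset_closure rfl)) g
  have h01 : Commute (chiComm a b) (chiComm a c) := by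
    rw [← chiComm_comm hG a b, ← chiComm_comm hG a c]
    exact commute_chiComm_chiComm hG b c a
  have h02 : Commute (chiComm a b) (chiComm b c) := by
    rw [← chiComm_comm hG b c]
    exact commute_chiComm_chiComm hG a c b
  have h12 : Commute (chiComm a c) (chiComm b c) := commute_chiComm_chiComm hG a b c
  intro i j hij
  fin_cases i <;> fin_cases j <;> simp only [chiDGens] <;>
    first
    | exact absurd rfl hij
    | exact ht _
    | exact (ht _).symm
    | exact h01
    | exact h01.symm
    | exact h02
    | exact h02.symm
    | exact h12
    | exact h12.symm

theorem range_commInvolutionsHom_chiDGens (hG : ∀ g : G, g * g = 1)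
    (hbasis : Subgroup.closure {a, b, c} = ⊤) :
    (commInvolutionsHom (chiDGens a b c) (chiDGens_mul_self hG)
      (chiDGens_pairwise_commute hG hbasis)).range = DSubgroup G := by
  rw [range_commInvolutionsHom, DSubgroup_eq_closure hG hbasis]
  simp only [chiDGens, Matrix.range_cons, Matrix.range_empty, Set.union_empty,
    Set.singleton_union]

theorem mul_self_eq_one_of_mem_DSubgroup (hG : ∀ g : G, g * g = 1)
    (hbasis : Subgroup.closure {a, b, c} = ⊤) {x : chi G} (hx : x ∈ DSubgroup G) : x * x = 1 := by
  rw [← range_commInvolutionsHom_chiDGens hG hbasis] at hx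
  exact mul_self_eq_one_of_mem_range_commInvolutionsHom hx

theorem commutator_DSubgroup_range_chiIota (hG : ∀ g : G, g * g = 1)
    (hbasis : Subgroup.closure {a, b, c} = ⊤) :
    ⁅DSubgroup G, (chiIota G).range⁆ = Subgroup.closure {chiTriple a b c} := by
  refine le_antisymm ((Subgroup.commutator_mono le_rfl le_top).trans
    (commutator_DSubgroup_top_le hG hbasis)) ((Subgroup.closure_le _).mpr ?_)
  rintro _ rfl
  exact Subgroup.commutator_mem_commutator (chiComm_mem_DSubgroup a b) ⟨c, rfl⟩

end RankThree

section Model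

open Equiv

/- A faithful action of `χ(C₂³)` (a group of order `1024`) on 32 points, found by machine. Only the
facts checked by `decide` below are used. -/
def modelIota : Fin 3 → Perm (Fin 32) :=
  ![Function.Involutive.toPerm ![1, 0, 7, 8, 13, 22, 20, 2, 3, 21, 28, 31, 14, 4, 12, 23, 17, 16,
      19, 18, 6, 9, 5, 15, 27, 26, 25, 24, 10, 30, 29, 11] (by unfold Function.Involutive; decide),
    Function.Involutive.toPerm ![2, 7, 0, 9, 22, 13, 19, 1, 21, 3, 17, 14, 31, 5, 11, 24, 28, 10,
      20, 6, 18, 8, 4, 27, 15, 29, 30, 23, 16, 25, 26, 12] (by unfold Function.Involutive; decide),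
    Function.Involutive.toPerm ![3, 8, 9, 0, 28, 17, 14, 21, 1, 2, 13, 19, 20, 10, 6, 29, 22, 5,
      31, 11, 12, 7, 16, 30, 25, 24, 27, 26, 4, 15, 23, 18] (by unfold Function.Involutive; decide)]

def modelIotaPhi : Fin 3 → Perm (Fin 32) :=
  ![Function.Involutive.toPerm ![4, 13, 24, 29, 0, 10, 11, 27, 30, 18, 5, 6, 25, 1, 26, 16, 15, 23,
      9, 21, 31, 19, 28, 17, 2, 12, 14, 7, 22, 3, 8, 20] (by unfold Function.Involutive; decide),
    Function.Involutive.toPerm ![5, 24, 13, 26, 10, 0, 12, 15, 18, 30, 4, 25, 6, 2, 29, 7, 27, 22,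
      8, 31, 21, 20, 17, 28, 1, 11, 3, 16, 23, 14, 9, 19] (by unfold Function.Involutive; decide),
    Function.Involutive.toPerm ![6, 2, 1, 14, 11, 12, 0, 16, 9, 8, 25, 4, 5, 24, 3, 27, 7, 20, 30,
      28, 17, 22, 21, 31, 13, 10, 29, 15, 19, 26, 18, 23] (by unfold Function.Involutive; decide)]

def modelD : Fin 4 → Perm (Fin 32) :=
  ![⁅modelIota 0, modelIotaPhi 1⁆, ⁅modelIota 0, modelIotaPhi 2⁆, ⁅modelIota 1, modelIotaPhi 2⁆,
    ⁅⁅modelIota 0, modelIotaPhi 1⁆, modelIota 2⁆]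

theorem modelIota_mul_self (i : Fin 3) : modelIota i * modelIota i = 1 := by
  revert i
  decide

theorem modelIotaPhi_mul_self (i : Fin 3) : modelIotaPhi i * modelIotaPhi i = 1 := by
  revert i
  decide

set_option maxRecDepth 8000 in
theorem modelD_mul_self (i : Fin 4) : modelD i * modelD i = 1 := by
  revert i
  decide

theorem modelIota_pairwise_commute : Pairwise fun i j => Commute (modelIota i) (modelIota j) := by
  intro i j _
  revert i j
  unfold Commute SemiconjBy
  decide

theorem modelIotaPhi_pairwise_commute :
    Pairwise fun i j => Commute (modelIotaPhi i) (modelIotaPhi j) := by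
  intro i j _
  revert i j
  unfold Commute SemiconjBy
  decide

set_option maxRecDepth 8000 in
theorem modelD_pairwise_commute : Pairwise fun i j => Commute (modelD i) (modelD j) := by
  intro i j _
  revert i j
  unfold Commute SemiconjBy
  decide

theorem commute_modelIota_modelIotaPhi (v : Fin 3 → Multiplicative (ZMod 2)) :
    Commute (commInvolutionsHom modelIota modelIota_mul_self modelIota_pairwise_commute v)
      (commInvolutionsHom modelIotaPhi modelIotaPhi_mul_self modelIotaPhi_pairwise_commute v) := by
  revert v
  unfold Commute SemiconjBy
  decide

set_option maxRecDepth 8000 in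
theorem injective_commInvolutionsHom_modelD :
    Function.Injective (commInvolutionsHom modelD modelD_mul_self modelD_pairwise_commute) := by
  decide

end Model

section Counting

variable {G : Type*} [Group G] {a b c : G}

theorem exists_chiHom_perm (hG : ∀ g : G, g * g = 1) (hbasis : Subgroup.closure {a, b, c} = ⊤)
    (hcard : Nat.card G = 8) :
    ∃ ψ : chi G →* Equiv.Perm (Fin 32), ∀ i, ψ (chiIota G (![a, b, c] i)) = modelIota i ∧
      ψ (chiIotaPhi G (![a, b, c] i)) = modelIotaPhi i := by
  have hx (i : Fin 3) : ![a, b, c] i * ![a, b, c] i = 1 := hG _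
  have hc : Pairwise fun i j => Commute (![a, b, c] i) (![a, b, c] j) :=
    fun _ _ _ => commute_of_forall_mul_self_eq_one hG _ _
  have hsurj : Function.Surjective (commInvolutionsHom ![a, b, c] hx hc) := by
    rw [← MonoidHom.range_eq_top, range_commInvolutionsHom, ← hbasis]
    simp only [Matrix.range_cons, Matrix.range_empty, Set.union_empty, Set.singleton_union]
  have hbij : Function.Bijective (commInvolutionsHom ![a, b, c] hx hc) :=
    (Nat.bijective_iff_surjective_and_card _).mpr ⟨hsurj, by rw [hcard]; simp⟩
  obtain ⟨E, hE⟩ : ∃ E : (Fin 3 → Multiplicative (ZMod 2)) ≃* G,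
      ∀ i, E.symm (![a, b, c] i) = Pi.mulSingle i (Multiplicative.ofAdd 1) :=
    ⟨MulEquiv.ofBijective _ hbij, fun i => by
      rw [MulEquiv.symm_apply_eq, MulEquiv.ofBijective_apply, commInvolutionsHom_mulSingle]⟩
  refine ⟨chiLift
    ((commInvolutionsHom modelIota _ modelIota_pairwise_commute).comp E.symm.toMonoidHom)
    ((commInvolutionsHom modelIotaPhi _ modelIotaPhi_pairwise_commute).comp E.symm.toMonoidHom)
    (fun g => (commute_iff_eq _ _).mpr (commute_modelIota_modelIotaPhi (E.symm g)).eq),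
    fun i => ?_⟩
  simp only [chiLift_chiIota, chiLift_chiIotaPhi, MonoidHom.comp_apply, MulEquiv.coe_toMonoidHom,
    hE, commInvolutionsHom_mulSingle, and_self]

theorem injective_commInvolutionsHom_chiDGens (hG : ∀ g : G, g * g = 1)
    (hbasis : Subgroup.closure {a, b, c} = ⊤) (hcard : Nat.card G = 8) :
    Function.Injective (commInvolutionsHom (chiDGens a b c) (chiDGens_mul_self hG)
      (chiDGens_pairwise_commute hG hbasis)) := by
  obtain ⟨ψ, hψ⟩ := exists_chiHom_perm hG hbasis hcard
  have hA : ψ (chiIota G a) = modelIota 0 := (hψ 0).1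
  have hB : ψ (chiIota G b) = modelIota 1 := (hψ 1).1
  have hC : ψ (chiIota G c) = modelIota 2 := (hψ 2).1
  have hB' : ψ (chiIotaPhi G b) = modelIotaPhi 1 := (hψ 1).2
  have hC' : ψ (chiIotaPhi G c) = modelIotaPhi 2 := (hψ 2).2
  have h := injective_commInvolutionsHom_modelD
  rw [← comp_commInvolutionsHom ψ (x := chiDGens a b c) fun i => by
    fin_cases i <;> simp [chiDGens, modelD, chiTriple, chiComm, hA, hB, hC, hB', hC']] at h
  rw [MonoidHom.coe_comp] at h
  exact h.of_comp

theorem card_DSubgroup (hG : ∀ g : G, g * g = 1) (hbasis : Subgroup.closure {a, b, c} = ⊤)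
    (hcard : Nat.card G = 8) : Nat.card (DSubgroup G) = 16 := by
  rw [← range_commInvolutionsHom_chiDGens hG hbasis, ← Nat.card_congr
    (MonoidHom.ofInjective (injective_commInvolutionsHom_chiDGens hG hbasis hcard)).toEquiv]
  simp

theorem chiTriple_ne_one (hG : ∀ g : G, g * g = 1) (hbasis : Subgroup.closure {a, b, c} = ⊤)
    (hcard : Nat.card G = 8) : chiTriple a b c ≠ 1 := by
  intro h
  have h3 := injective_commInvolutionsHom_chiDGens hG hbasis hcard
    ((commInvolutionsHom_mulSingle (3 : Fin 4)).trans (h.trans (map_one _).symm))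
  exact absurd (congrFun h3 3) (by decide)

end Counting

/-- **Remark.** Let `G = ⟨a, b, c⟩` be an elementary abelian `2`-group of rank `3`.
Then `χ(G)` is nilpotent of class exactly `3`,
`D(G) = ⟨[a,b^φ], [a,c^φ], [b,c^φ], [a,b^φ,c]⟩ ≅ (ℤ/2)⁴` (elementary abelian of
order `16`), and `[D(G), G] = ⟨[a,b^φ,c]⟩` has order `2`.  In particular, `D(G)` is
not powerfully embedded in `χ(G)` for `p = 2`: `[D(G), χ(G)] ≰ D(G)^4`. -/
theorem chi_elementary_abelian_rank_three (G : Type*) [Group G]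
    (h2 : ∀ g : G, g * g = 1) (a b c : G)
    (hbasis : Subgroup.closure {a, b, c} = ⊤) (hcard : Nat.card G = 8) :
    ((⊤ : Subgroup (chi G)).lowerCentralSeries 3 = ⊥ ∧ (⊤ : Subgroup (chi G)).lowerCentralSeries 2 ≠ ⊥) ∧
    (DSubgroup G = Subgroup.closure
        {comm' (chiIota G a) (chiIotaPhi G b), comm' (chiIota G a) (chiIotaPhi G c),
          comm' (chiIota G b) (chiIotaPhi G c),
          comm' (comm' (chiIota G a) (chiIotaPhi G b)) (chiIota G c)} ∧
      Nat.card (DSubgroup G) = 16 ∧ ∀ x ∈ DSubgroup G, x * x = 1) ∧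
    (⁅DSubgroup G, (chiIota G).range⁆ =
        Subgroup.closure {comm' (comm' (chiIota G a) (chiIotaPhi G b)) (chiIota G c)} ∧
      Nat.card ↥(⁅DSubgroup G, (chiIota G).range⁆ : Subgroup (chi G)) = 2) ∧
    ¬ ⁅DSubgroup G, (⊤ : Subgroup (chi G))⁆ ≤ spow (DSubgroup G) 4 := by
  have hcomm (x y : G) : comm' (chiIota G x) (chiIotaPhi G y) = chiComm x y :=
    comm'_eq_commutatorElement (chiIota_mul_self h2 x) (chiIotaPhi_mul_self h2 y)
  have htriple : comm' (chiComm a b) (chiIota G c) = chiTriple a b c :=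
    comm'_eq_commutatorElement (chiComm_mul_self h2 a b) (chiIota_mul_self h2 c)
  simp only [hcomm, htriple]
  have hsq := fun x => mul_self_eq_one_of_mem_DSubgroup (x := x) h2 hbasis
  have hT := commutator_DSubgroup_range_chiIota h2 hbasis
  have ht_mem : chiTriple a b c ∈ ⁅DSubgroup G, ⊤⁆ :=
    Subgroup.commutator_mem_commutator (chiComm_mem_DSubgroup a b) (Subgroup.mem_top _)
  have ht_ne := chiTriple_ne_one h2 hbasis hcard
  refine ⟨⟨lowerCentralSeries_three_eq_bot h2 hbasis, fun h => ht_ne ?_⟩,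
    ⟨DSubgroup_eq_closure h2 hbasis, card_DSubgroup h2 hbasis hcard, hsq⟩, ⟨hT, ?_⟩, fun h => ?_⟩
  · exact Subgroup.mem_bot.mp (h ▸ chiTriple_mem_lowerCentralSeries_two a b c)
  · rw [hT, ← Subgroup.zpowers_eq_closure, Nat.card_zpowers]
    exact orderOf_eq_prime (by rw [sq]; exact chiTriple_mul_self h2 a b c) ht_ne
  · have := h ht_mem
    rw [spow_four_eq_bot hsq, Subgroup.mem_bot] at this
    exact ht_ne this
end

section
/- Let G be a finite p-group and let N and M be normal subgroups of G. If N ≤ M[N,G]N^p, then N ≤ M. -/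
theorem map_spow {G H : Type*} [Group G] [Group H] (f : G →* H) (N : Subgroup G) (n : ℕ) :
    (spow N n).map f = spow (N.map f) n := by
  rw [spow, spow, MonoidHom.map_closure]
  congr 1
  ext x
  simp [eq_comm]

open scoped IsMulCommutative in
theorem eq_bot_of_le_spow {p : ℕ} {G : Type*} [Group G] {A : Subgroup G} [Finite A]
    [IsMulCommutative A] (hA : IsPGroup p A) (h : A ≤ spow A p) : A = ⊥ := by
  have hsurj : Function.Surjective (powMonoidHom p : A →* A) := by
    have hle : spow A p ≤ (powMonoidHom p : A →* A).range.map A.subtype := by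
      rw [spow, Subgroup.closure_le]
      rintro _ ⟨a, ha, rfl⟩
      exact ⟨⟨a, ha⟩ ^ p, ⟨⟨a, ha⟩, rfl⟩, rfl⟩
    intro a
    obtain ⟨_, ⟨b, rfl⟩, hb⟩ := hle (h a.2)
    exact ⟨b, Subtype.ext hb⟩
  have hinj : Function.Injective (· ^ p : A → A) := Finite.injective_iff_surjective.mpr hsurj
  refine (Subgroup.eq_bot_iff_forall A).mpr fun x hx => ?_
  obtain ⟨k, hk⟩ := hA ⟨x, hx⟩
  have : (⟨x, hx⟩ : A) = 1 := hinj.iterate k <| by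
    simp only [pow_iterate, hk, one_pow]
  simpa using congrArg Subtype.val this

namespace Subgroup

variable {G : Type*} [Group G]

theorem eq_bot_of_le_commutator_top [Group.IsNilpotent G] {N : Subgroup G}
    (h : N ≤ ⁅N, ⊤⁆) : N = ⊥ := by
  obtain ⟨n, hn⟩ := nilpotent_iff_lowerCentralSeries.mp ‹_›
  have hle (k : ℕ) : N ≤ lowerCentralSeries ⊤ k := by
    induction k with
    | zero => exact le_top
    | succ k ih => exact h.trans (commutator_mono ih le_rfl)
  exact eq_bot_iff.mpr (hn ▸ hle n)

open QuotientGroup in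
theorem le_of_le_sup_commutator_top [Group.IsNilpotent G] {N M : Subgroup G} [M.Normal]
    (h : N ≤ M ⊔ ⁅N, ⊤⁆) : N ≤ M := by
  have hmap : N.map (mk' M) ≤ ⁅N.map (mk' M), ⊤⁆ :=
    calc N.map (mk' M) ≤ (M ⊔ ⁅N, ⊤⁆).map (mk' M) := map_mono h
      _ = ⁅N.map (mk' M), ⊤⁆ := by
        rw [map_sup, map_mk'_self, bot_sup_eq, map_commutator,
          map_top_of_surjective _ (mk'_surjective M)]
  rw [← ker_mk' M, ← map_eq_bot_iff]
  exact eq_bot_of_le_commutator_top hmap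

open QuotientGroup in
theorem le_of_commutator_le_of_le_sup_spow {p : ℕ} [Finite G] (hG : IsPGroup p G)
    {N K : Subgroup G} [K.Normal] (hcomm : ⁅N, N⁆ ≤ K) (h : N ≤ K ⊔ spow N p) : N ≤ K := by
  have : IsMulCommutative (N.map (mk' K)) := by
    rw [← commutator_self_eq_bot_iff, ← map_commutator, map_eq_bot_iff, ker_mk']
    exact hcomm
  have hmap : N.map (mk' K) ≤ spow (N.map (mk' K)) p :=
    calc N.map (mk' K) ≤ (K ⊔ spow N p).map (mk' K) := map_mono h
      _ = spow (N.map (mk' K)) p := by rw [map_sup, map_mk'_self, bot_sup_eq, map_spow]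
  rw [← ker_mk' K, ← map_eq_bot_iff]
  exact eq_bot_of_le_spow ((hG.to_quotient K).to_subgroup _) hmap

end Subgroup

/-- **Lemma.** Let `G` be a finite `p`-group and `N`, `M` normal subgroups of `G`.
If `N ≤ M[N,G]N^p` then `N ≤ M`. -/
theorem le_of_le_mul_comm_mul_pow (p : ℕ) (hp : p.Prime) (G : Type*) [Group G] [Finite G]
    (hG : IsPGroup p G) (N M : Subgroup G) (hN : N.Normal) (hM : M.Normal)
    (h : N ≤ M ⊔ ⁅N, (⊤ : Subgroup G)⁆ ⊔ spow N p) : N ≤ M := by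
  have : Fact p.Prime := ⟨hp⟩
  have : Group.IsNilpotent G := hG.isNilpotent
  have hNK : N ≤ M ⊔ ⁅N, ⊤⁆ := Subgroup.le_of_commutator_le_of_le_sup_spow hG
    ((Subgroup.commutator_mono le_rfl le_top).trans le_sup_right) h
  exact Subgroup.le_of_le_sup_commutator_top hNK
end

section
/- Let p be a prime, G a finite p-group, and x, y elements of G. Then for any k ≥ 0, (xy)^{p^k} ≡ x^{p^k} y^{p^k} modulo the subgroup γ_2(L)^{p^k} γ_p(L)^{p^{k-1}} γ_{p^2}(L)^{p^{k-2}} γ_{p^3}(L)^{p^{k-3}} ⋯ γ_{p^k}(L), where L = ⟨x, y⟩. -/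
namespace HallCollect

open Subgroup

universe u

variable {H : Type u} [Group H]

open scoped commutatorElement

abbrev lowerCentralSeries (H : Type u) [Group H] (n : ℕ) : Subgroup H :=
  Subgroup.lowerCentralSeries (⊤ : Subgroup H) n

lemma lowerCentralSeries_zero : lowerCentralSeries H 0 = ⊤ := rfl

lemma lowerCentralSeries_antitone : Antitone (lowerCentralSeries H) :=
  Subgroup.lowerCentralSeries_antitone ⊤

lemma lowerCentralSeries.map {H' : Type u} [Group H'] (f : H →* H') (n : ℕ) :
    (lowerCentralSeries H n).map f ≤ lowerCentralSeries H' n :=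
  Subgroup.lowerCentralSeries.map f n

/-- Three subgroups lemma, `≤ K` version. -/
theorem three_subgroups {H₁ H₂ H₃ K : Subgroup H} [K.Normal]
    (h1 : ⁅⁅H₂, H₃⁆, H₁⁆ ≤ K) (h2 : ⁅⁅H₃, H₁⁆, H₂⁆ ≤ K) : ⁅⁅H₁, H₂⁆, H₃⁆ ≤ K := by
  have e : ∀ S : Subgroup H, S ≤ K ↔ Subgroup.map (QuotientGroup.mk' K) S = ⊥ := by
    intro S
    rw [Subgroup.map_eq_bot_iff, QuotientGroup.ker_mk']
  rw [e] at h1 h2 ⊢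
  rw [Subgroup.map_commutator, Subgroup.map_commutator] at h1 h2 ⊢
  exact Subgroup.commutator_commutator_eq_bot_of_rotate h1 h2

theorem lcs_comm (m n : ℕ) :
    ⁅lowerCentralSeries H m, lowerCentralSeries H n⁆ ≤ lowerCentralSeries H (m + n + 1) := by
  induction n generalizing m with
  | zero =>
    rw [lowerCentralSeries_zero]
    exact le_of_eq rfl
  | succ n ih =>
    have hdef : lowerCentralSeries H (n + 1) = ⁅lowerCentralSeries H n, ⊤⁆ := rfl
    rw [hdef, Subgroup.commutator_comm (lowerCentralSeries H m)]
    refine three_subgroups ?_ ?_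
    · rw [Subgroup.commutator_comm (⊤ : Subgroup H) (lowerCentralSeries H m)]
      have h1 : ⁅lowerCentralSeries H m, (⊤ : Subgroup H)⁆ = lowerCentralSeries H (m + 1) := rfl
      rw [h1]
      exact (ih (m + 1)).trans (lowerCentralSeries_antitone (by omega))
    · refine (Subgroup.commutator_mono (ih m) le_rfl).trans ?_
      have h1 : ⁅lowerCentralSeries H (m + n + 1), (⊤ : Subgroup H)⁆ =
          lowerCentralSeries H (m + n + 2) := rfl
      rw [h1]
      exact lowerCentralSeries_antitone (by omega)

/-- `Gm H i` is `γ_i(H)` (with `Gm H 0 = Gm H 1 = H`). -/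
def Gm (H : Type u) [Group H] (i : ℕ) : Subgroup H := lowerCentralSeries H (i - 1)

lemma Gm_eq (i : ℕ) : Gm H i = lowerCentralSeries H (i - 1) := rfl

instance (i : ℕ) : (Gm H i).Normal := by
  rw [Gm_eq]; infer_instance

lemma Gm_anti {i j : ℕ} (h : i ≤ j) : Gm H j ≤ Gm H i :=
  lowerCentralSeries_antitone (by omega)

lemma Gm_comm (i j : ℕ) : ⁅Gm H i, Gm H j⁆ ≤ Gm H (i + j) := by
  rw [Gm_eq, Gm_eq, Gm_eq]
  exact (lcs_comm (i - 1) (j - 1)).trans (lowerCentralSeries_antitone (by omega))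

lemma Gm_comm_mem {i j : ℕ} {a b : H} (ha : a ∈ Gm H i) (hb : b ∈ Gm H j) :
    ⁅a, b⁆ ∈ Gm H (i + j) :=
  Gm_comm i j (Subgroup.commutator_mem_commutator ha hb)

/-- Forward difference of a sequence. -/
def dd (h : ℕ) (F : ℕ → H) : ℕ → H := fun n => (F n)⁻¹ * F (n + h)

lemma dd_spec (h : ℕ) (F : ℕ → H) (n : ℕ) : F n * dd h F n = F (n + h) := by
  simp [dd]

/-- Iterated differences. -/
def iterD : List ℕ → (ℕ → H) → ℕ → H
  | [], F => F
  | h :: L, F => iterD L (dd h F)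

/-- `isS j F`: `F` is a polynomial sequence of filtration degree `j`. -/
def isS (j : ℕ) (F : ℕ → H) : Prop :=
  ∀ L : List ℕ, ∀ n, iterD L F n ∈ Gm H (L.length + j)

lemma isS_val {j : ℕ} {F : ℕ → H} (hF : isS j F) (n : ℕ) : F n ∈ Gm H j := by
  have := hF [] n
  simpa [iterD] using this

lemma isS_one (j : ℕ) : isS j (fun _ : ℕ => (1 : H)) := by
  have key : ∀ L : List ℕ, iterD L (fun _ : ℕ => (1 : H)) = fun _ => 1 := by
    intro L
    induction L with
    | nil => rfl
    | cons h L ih =>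
      show iterD L (dd h fun _ => (1 : H)) = fun _ => 1
      have e : dd h (fun _ : ℕ => (1 : H)) = fun _ : ℕ => (1 : H) := by
        funext n; simp [dd]
      rw [e, ih]
  intro L n
  rw [key L]
  exact one_mem _

lemma isS_congr {j : ℕ} {F K : ℕ → H} (h : ∀ n, F n = K n) (hF : isS j F) : isS j K := by
  have : F = K := funext h
  rwa [this] at hF

lemma isS_mono {j₁ j₂ : ℕ} {F : ℕ → H} (h : j₁ ≤ j₂) (hF : isS j₂ F) : isS j₁ F :=
  fun L n => Gm_anti (by omega) (hF L n)

lemma isS_dd {j : ℕ} {F : ℕ → H} (hF : isS j F) (h : ℕ) : isS (j + 1) (dd h F) := by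
  intro L n
  have := hF (h :: L) n
  have e : (h :: L).length + j = L.length + (j + 1) := by simp; omega
  rw [e] at this
  exact this

lemma isS_of_dd {j : ℕ} {F : ℕ → H} (hv : ∀ n, F n ∈ Gm H j)
    (hd : ∀ h, isS (j + 1) (dd h F)) : isS j F := by
  intro L n
  cases L with
  | nil => simpa [iterD] using hv n
  | cons h L =>
    have := hd h L n
    have e : L.length + (j + 1) = (h :: L).length + j := by simp; omega
    rw [e] at this
    exact this

section Maps

variable {H' : Type u} [Group H']

lemma dd_comp (φ : H →* H') (F : ℕ → H) (h : ℕ) :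
    dd h (fun n => φ (F n)) = fun n => φ (dd h F n) := by
  funext n; simp [dd]

lemma iterD_comp (φ : H →* H') (L : List ℕ) :
    ∀ F : ℕ → H, iterD L (fun n => φ (F n)) = fun n => φ (iterD L F n) := by
  induction L with
  | nil => intro F; rfl
  | cons h L ih =>
    intro F
    show iterD L (dd h fun n => φ (F n)) = _
    rw [dd_comp φ F h, ih (dd h F)]
    rfl

lemma Gm_map_le (φ : H →* H') (i : ℕ) : (Gm H i).map φ ≤ Gm H' i :=
  lowerCentralSeries.map φ (i - 1)

lemma isS_comp (φ : H →* H') {j : ℕ} {F : ℕ → H} (hF : isS j F) :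
    isS j (fun n => φ (F n)) := by
  intro L n
  rw [iterD_comp]
  exact Gm_map_le φ _ (Subgroup.mem_map_of_mem φ (hF L n))

lemma lcs_map_surj (φ : H →* H') (hφ : Function.Surjective φ) (n : ℕ) :
    Subgroup.map φ (lowerCentralSeries H n) = lowerCentralSeries H' n := by
  induction n with
  | zero =>
    rw [lowerCentralSeries_zero, lowerCentralSeries_zero]
    exact Subgroup.map_top_of_surjective φ hφ
  | succ n ih =>
    show Subgroup.map φ ⁅lowerCentralSeries H n, ⊤⁆ = ⁅lowerCentralSeries H' n, ⊤⁆
    rw [Subgroup.map_commutator, ih, Subgroup.map_top_of_surjective φ hφ]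

lemma Gm_map_surj (φ : H →* H') (hφ : Function.Surjective φ) (i : ℕ) :
    Subgroup.map φ (Gm H i) = Gm H' i :=
  lcs_map_surj φ hφ (i - 1)

end Maps

/-- `isW c j q`: values in `Gm H j` and polynomial modulo the top term `Gm H c`. -/
def isW (c j : ℕ) (q : ℕ → H) : Prop :=
  (∀ n, q n ∈ Gm H j) ∧ isS j (fun n => (QuotientGroup.mk' (Gm H c)) (q n))

lemma isSW {c j : ℕ} {F : ℕ → H} (hF : isS j F) : isW c j F :=
  ⟨fun n => isS_val hF n, isS_comp _ hF⟩

/-- Word identity used in the commutator-of-polynomials step. -/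
lemma key_identity (q r a b : H) :
    ((q * ⁅a, r⁆ * q⁻¹) * (q * r * ⁅a, b⁆ * (q * r)⁻¹)) *
        ⁅((q * ⁅a, r⁆ * q⁻¹) * (q * r * ⁅a, b⁆ * (q * r)⁻¹))⁻¹, ⁅q, r⁆⁻¹⁆ *
        (r * ⁅q, b⁆ * r⁻¹) = ⁅q, r⁆⁻¹ * ⁅q * a, r * b⁆ := by
  simp only [commutatorElement_def]
  group

/-- The master closure theorem (Lazard–Leibman style). -/
theorem master (c : ℕ) : ∀ (H : Type u) [Group H], lowerCentralSeries H c = ⊥ →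
    ∀ j : ℕ,
      (∀ F K : ℕ → H, isS j F → isS j K → isS j (fun n => F n * K n)) ∧
      (∀ F : ℕ → H, isS j F → isS j (fun n => (F n)⁻¹)) ∧
      (∀ s t : ℕ, s + t = j → ∀ q r : ℕ → H, isW c s q → isW c t r →
        isS j (fun n => ⁅q n, r n⁆)) := by
  induction c with
  | zero =>
    intro H _ hc j
    rw [lowerCentralSeries_zero] at hc
    have htriv : ∀ g : H, g = 1 := by
      intro g
      have h2 : g ∈ (⊤ : Subgroup H) := Subgroup.mem_top g
      rw [hc] at h2
      exact Subgroup.mem_bot.mp h2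
    have T : ∀ (jj : ℕ) (F : ℕ → H), isS jj F := by
      intro jj F L n
      rw [htriv (iterD L F n)]
      exact one_mem _
    exact ⟨fun F K _ _ => T _ _, fun F _ => T _ _, fun s t _ q r _ _ => T _ _⟩
  | succ c' ih =>
    intro H _ hc j
    set π := QuotientGroup.mk' (Gm H (c' + 1)) with hπdef
    have hπs : Function.Surjective π := QuotientGroup.mk'_surjective _
    have hA : Gm H (c' + 1) = lowerCentralSeries H c' := rfl
    have hcbar : lowerCentralSeries (H ⧸ Gm H (c' + 1)) c' = ⊥ := by
      rw [← lcs_map_surj π hπs c', ← hA, Subgroup.map_eq_bot_iff, QuotientGroup.ker_mk']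
    have QP := ih (H ⧸ Gm H (c' + 1)) hcbar
    suffices ALL : ∀ d jj : ℕ, c' + 2 ≤ jj + d →
        (∀ F K : ℕ → H, isS jj F → isS jj K → isS jj (fun n => F n * K n)) ∧
        (∀ F : ℕ → H, isS jj F → isS jj (fun n => (F n)⁻¹)) ∧
        (∀ s t : ℕ, s + t = jj → ∀ q r : ℕ → H, isW (c' + 1) s q → isW (c' + 1) t r →
          isS jj (fun n => ⁅q n, r n⁆)) by
      exact ALL (c' + 2) j (by omega)
    intro d
    induction d with
    | zero =>
      intro jj hjj
      have hbot : ∀ g : H, g ∈ Gm H jj → g = 1 := by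
        intro g hg
        have h1 : Gm H jj ≤ lowerCentralSeries H (c' + 1) := by
          rw [Gm_eq]
          exact lowerCentralSeries_antitone (by omega)
        have := h1 hg
        rw [hc] at this
        simpa using this
      refine ⟨?_, ?_, ?_⟩
      · intro F K hF hK
        exact isS_congr (fun n => by
          simp [hbot (F n) (isS_val hF n), hbot (K n) (isS_val hK n)]) (isS_one jj)
      · intro F hF
        exact isS_congr (fun n => by simp [hbot (F n) (isS_val hF n)]) (isS_one jj)
      · intro s t hst q r hq hr
        refine isS_congr (fun n => ?_) (isS_one jj)
        have hm : ⁅q n, r n⁆ ∈ Gm H jj := hst ▸ Gm_comm_mem (hq.1 n) (hr.1 n)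
        simp [hbot _ hm]
    | succ d ihd =>
      intro jj hjj
      have IHge : ∀ r, jj + 1 ≤ r →
          (∀ F K : ℕ → H, isS r F → isS r K → isS r (fun n => F n * K n)) ∧
          (∀ F : ℕ → H, isS r F → isS r (fun n => (F n)⁻¹)) ∧
          (∀ s t : ℕ, s + t = r → ∀ q q' : ℕ → H, isW (c' + 1) s q → isW (c' + 1) t q' →
            isS r (fun n => ⁅q n, q' n⁆)) := by
        intro r hr
        exact ihd r (by omega)
      have Mul : ∀ r, jj + 1 ≤ r → ∀ F K : ℕ → H, isS r F → isS r K →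
          isS r (fun n => F n * K n) := fun r hr => (IHge r hr).1
      have Inv : ∀ r, jj + 1 ≤ r → ∀ F : ℕ → H, isS r F → isS r (fun n => (F n)⁻¹) :=
        fun r hr => (IHge r hr).2.1
      have MC : ∀ r, jj + 1 ≤ r → ∀ s t : ℕ, s + t = r → ∀ q q' : ℕ → H,
          isW (c' + 1) s q → isW (c' + 1) t q' → isS r (fun n => ⁅q n, q' n⁆) :=
        fun r hr => (IHge r hr).2.2
      -- conjugation helper
      have Conj : ∀ α β : ℕ, ∀ X g : ℕ → H, jj + 1 ≤ α → isS α X → isW (c' + 1) β g →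
          isS α (fun n => g n * X n * (g n)⁻¹) := by
        intro α β X g hα hX hg
        have h1 : isS (β + α) (fun n => ⁅g n, X n⁆) :=
          MC (β + α) (by omega) β α rfl g X hg (isSW hX)
        have h2 : isS α (fun n => ⁅g n, X n⁆) := isS_mono (by omega) h1
        have h3 := Mul α hα _ _ h2 hX
        exact isS_congr (fun n => by simp only [commutatorElement_def]; group) h3
      -- difference of a W-sequence
      have Wdd : ∀ (s : ℕ) (q : ℕ → H) (h : ℕ), s + 1 ≤ c' + 1 → isW (c' + 1) s q →
          isW (c' + 1) (s + 1) (dd h q) := by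
        intro s q h hs hq
        constructor
        · intro n
          have h1 : π (dd h q n) ∈ Gm (H ⧸ Gm H (c' + 1)) (s + 1) := by
            have h2 := isS_dd hq.2 h
            have e : dd h (fun n => π (q n)) = fun n => π (dd h q n) := dd_comp π q h
            rw [e] at h2
            exact isS_val h2 n
          rw [← Gm_map_surj π hπs (s + 1)] at h1
          obtain ⟨w, hw, hwe⟩ := h1
          have hker : w⁻¹ * dd h q n ∈ Gm H (c' + 1) := by
            have he : π (w⁻¹ * dd h q n) = 1 := by
              rw [map_mul, map_inv, hwe]
              group
            rwa [← QuotientGroup.ker_mk' (Gm H (c' + 1)), MonoidHom.mem_ker]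
          have hker2 : w⁻¹ * dd h q n ∈ Gm H (s + 1) := Gm_anti hs hker
          have := mul_mem hw hker2
          simpa using this
        · have := isS_dd hq.2 h
          rw [dd_comp π q h] at this
          exact this
      -- products and inverses of W-sequences
      have Wmul : ∀ (α β : ℕ) (q r : ℕ → H), isW (c' + 1) α q → isW (c' + 1) β r →
          isW (c' + 1) (min α β) (fun n => q n * r n) := by
        intro α β q r hq hr
        refine ⟨fun n => mul_mem (Gm_anti (min_le_left α β) (hq.1 n))
          (Gm_anti (min_le_right α β) (hr.1 n)), ?_⟩
        have h1 := (QP (min α β)).1 _ _ (isS_mono (min_le_left α β) hq.2)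
          (isS_mono (min_le_right α β) hr.2)
        exact isS_congr (fun n => (map_mul π (q n) (r n)).symm) h1
      have Winv : ∀ (α : ℕ) (q : ℕ → H), isW (c' + 1) α q →
          isW (c' + 1) α (fun n => (q n)⁻¹) := by
        intro α q hq
        exact ⟨fun n => inv_mem (hq.1 n),
          isS_congr (fun n => (map_inv π (q n)).symm) ((QP α).2.1 _ hq.2)⟩
      refine ⟨?_, ?_, ?_⟩
      · -- multiplication
        intro F K hF hK
        refine isS_of_dd (fun n => mul_mem (isS_val hF n) (isS_val hK n)) ?_
        intro h
        have m1 : isS (jj + 1) (dd h F) := isS_dd hF h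
        have m2 : isS (jj + 1) (fun n => (dd h F n)⁻¹) := Inv (jj + 1) le_rfl _ m1
        have m3 : isW (c' + 1) jj (fun n => (K n)⁻¹) := Winv jj K (isSW hK)
        have m4 : isS ((jj + 1) + jj) (fun n => ⁅(dd h F n)⁻¹, (K n)⁻¹⁆) :=
          MC ((jj + 1) + jj) (by omega) (jj + 1) jj rfl _ _ (isSW m2) m3
        have m5 : isS (jj + 1) (fun n => ⁅(dd h F n)⁻¹, (K n)⁻¹⁆) := isS_mono (by omega) m4
        have m6 := Mul (jj + 1) le_rfl _ _ m1 m5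
        have m7 := Mul (jj + 1) le_rfl _ _ m6 (isS_dd hK h)
        refine isS_congr (fun n => ?_) m7
        show dd h F n * ⁅(dd h F n)⁻¹, (K n)⁻¹⁆ * dd h K n = dd h (fun n => F n * K n) n
        simp only [dd, commutatorElement_def]
        group
      · -- inversion
        intro F hF
        refine isS_of_dd (fun n => inv_mem (isS_val hF n)) ?_
        intro h
        have m1 : isS (jj + 1) (dd h F) := isS_dd hF h
        have m2 := Inv (jj + 1) le_rfl _ m1
        have m3 : isS ((jj + 1) + jj) (fun n => ⁅dd h F n, F n⁆) :=
          MC ((jj + 1) + jj) (by omega) (jj + 1) jj rfl _ _ (isSW m1) (isSW hF)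
        have m4 : isS (jj + 1) (fun n => ⁅dd h F n, F n⁆) := isS_mono (by omega) m3
        have m5 := Mul (jj + 1) le_rfl _ _ m2 m4
        refine isS_congr (fun n => ?_) m5
        show (dd h F n)⁻¹ * ⁅dd h F n, F n⁆ = dd h (fun n => (F n)⁻¹) n
        simp only [dd, commutatorElement_def]
        group
      · -- commutator
        intro s t hst q r hq hr
        by_cases hs : c' + 1 ≤ s
        · refine isS_congr (fun n => ?_) (isS_one jj)
          have h1 : q n ∈ lowerCentralSeries H c' := by
            have := Gm_anti hs (hq.1 n)
            rwa [hA] at this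
          have h2 : ⁅q n, r n⁆ ∈ ⁅lowerCentralSeries H c', (⊤ : Subgroup H)⁆ :=
            Subgroup.commutator_mem_commutator h1 (Subgroup.mem_top _)
          have h3 : ⁅lowerCentralSeries H c', (⊤ : Subgroup H)⁆ =
              lowerCentralSeries H (c' + 1) := rfl
          rw [h3, hc] at h2
          have h4 : ⁅q n, r n⁆ = 1 := by simpa using h2
          simp [h4]
        by_cases ht : c' + 1 ≤ t
        · refine isS_congr (fun n => ?_) (isS_one jj)
          have h1 : r n ∈ lowerCentralSeries H c' := by
            have := Gm_anti ht (hr.1 n)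
            rwa [hA] at this
          have h2 : ⁅q n, r n⁆ ∈ ⁅(⊤ : Subgroup H), lowerCentralSeries H c'⁆ :=
            Subgroup.commutator_mem_commutator (Subgroup.mem_top _) h1
          rw [Subgroup.commutator_comm] at h2
          have h3 : ⁅lowerCentralSeries H c', (⊤ : Subgroup H)⁆ =
              lowerCentralSeries H (c' + 1) := rfl
          rw [h3, hc] at h2
          have h4 : ⁅q n, r n⁆ = 1 := by simpa using h2
          simp [h4]
        push_neg at hs ht
        subst hst
        refine isS_of_dd (fun n => Gm_comm_mem (hq.1 n) (hr.1 n)) ?_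
        intro h
        have ha : isW (c' + 1) (s + 1) (dd h q) := Wdd s q h (by omega) hq
        have hb : isW (c' + 1) (t + 1) (dd h r) := Wdd t r h (by omega) hr
        have hP1 : isS (s + t + 1) (fun n => ⁅dd h q n, r n⁆) :=
          isS_mono (by omega) (MC ((s + 1) + t) (by omega) (s + 1) t rfl _ _ ha hr)
        have hP2 : isS (s + t + 1) (fun n => q n * ⁅dd h q n, r n⁆ * (q n)⁻¹) :=
          Conj (s + t + 1) s _ q (by omega) hP1 hq
        have hP3 : isS (s + t + 1) (fun n => ⁅dd h q n, dd h r n⁆) :=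
          isS_mono (by omega) (MC ((s + 1) + (t + 1)) (by omega) (s + 1) (t + 1) rfl _ _ ha hb)
        have hqr : isW (c' + 1) (min s t) (fun n => q n * r n) := Wmul s t q r hq hr
        have hP4 : isS (s + t + 1)
            (fun n => (q n * r n) * ⁅dd h q n, dd h r n⁆ * (q n * r n)⁻¹) :=
          Conj (s + t + 1) (min s t) _ _ (by omega) hP3 hqr
        have hP5 : isS (s + t + 1)
            (fun n => (q n * ⁅dd h q n, r n⁆ * (q n)⁻¹) *
              ((q n * r n) * ⁅dd h q n, dd h r n⁆ * (q n * r n)⁻¹)) :=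
          Mul (s + t + 1) (by omega) _ _ hP2 hP4
        have hQ : isW (c' + 1) (s + t) (fun n => ⁅q n, r n⁆) := by
          refine ⟨fun n => Gm_comm_mem (hq.1 n) (hr.1 n), ?_⟩
          have h1 := (QP (s + t)).2.2 s t rfl _ _ (isSW hq.2) (isSW hr.2)
          exact isS_congr (fun n => (map_commutatorElement π (q n) (r n)).symm) h1
        have hQi : isW (c' + 1) (s + t) (fun n => (⁅q n, r n⁆)⁻¹) := Winv _ _ hQ
        have hP5i : isS (s + t + 1)
            (fun n => ((q n * ⁅dd h q n, r n⁆ * (q n)⁻¹) *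
              ((q n * r n) * ⁅dd h q n, dd h r n⁆ * (q n * r n)⁻¹))⁻¹) :=
          Inv (s + t + 1) (by omega) _ hP5
        have hP6c : isS (s + t + 1)
            (fun n => ⁅((q n * ⁅dd h q n, r n⁆ * (q n)⁻¹) *
              ((q n * r n) * ⁅dd h q n, dd h r n⁆ * (q n * r n)⁻¹))⁻¹, (⁅q n, r n⁆)⁻¹⁆) :=
          isS_mono (by omega)
            (MC ((s + t + 1) + (s + t)) (by omega) (s + t + 1) (s + t) rfl _ _ (isSW hP5i) hQi)
        have hP6 := Mul (s + t + 1) (by omega) _ _ hP5 hP6c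
        have hP7 : isS (s + t + 1) (fun n => ⁅q n, dd h r n⁆) :=
          isS_mono (by omega) (MC (s + (t + 1)) (by omega) s (t + 1) rfl _ _ hq hb)
        have hP8 : isS (s + t + 1) (fun n => r n * ⁅q n, dd h r n⁆ * (r n)⁻¹) :=
          Conj (s + t + 1) t _ r (by omega) hP7 hr
        have hFin := Mul (s + t + 1) (by omega) _ _ hP6 hP8
        refine isS_congr (fun n => ?_) hFin
        show ((q n * ⁅dd h q n, r n⁆ * (q n)⁻¹) * ((q n * r n) * ⁅dd h q n, dd h r n⁆ *
              (q n * r n)⁻¹)) *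
            ⁅((q n * ⁅dd h q n, r n⁆ * (q n)⁻¹) * ((q n * r n) * ⁅dd h q n, dd h r n⁆ *
              (q n * r n)⁻¹))⁻¹, (⁅q n, r n⁆)⁻¹⁆ *
            (r n * ⁅q n, dd h r n⁆ * (r n)⁻¹) = dd h (fun n => ⁅q n, r n⁆) n
        rw [key_identity (q n) (r n) (dd h q n) (dd h r n)]
        show ⁅q n, r n⁆⁻¹ * ⁅q n * dd h q n, r n * dd h r n⁆ =
          (⁅q n, r n⁆)⁻¹ * ⁅q (n + h), r (n + h)⁆
        rw [dd_spec h q n, dd_spec h r n]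

/-! ### Binomial polynomial exponents -/

def ddZ (h : ℕ) (P : ℕ → ℤ) : ℕ → ℤ := fun n => P (n + h) - P n

def DegLt : ℕ → (ℕ → ℤ) → Prop
  | 0, P => ∀ n, P n = 0
  | (d + 1), P => ∀ h, DegLt d (ddZ h P)

lemma DegLt_congr : ∀ {d : ℕ} {P Q : ℕ → ℤ}, (∀ n, P n = Q n) → DegLt d P → DegLt d Q := by
  intro d
  induction d with
  | zero => intro P Q h hP n; rw [← h n]; exact hP n
  | succ d ih =>
    intro P Q h hP h'
    exact ih (fun n => by simp [ddZ, h]) (hP h')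

lemma DegLt_zero_fun : ∀ d : ℕ, DegLt d (fun _ : ℕ => (0 : ℤ)) := by
  intro d
  induction d with
  | zero => intro n; rfl
  | succ d ih => intro h; exact DegLt_congr (fun n => by simp [ddZ]) ih

lemma DegLt_add : ∀ {d : ℕ} {P Q : ℕ → ℤ}, DegLt d P → DegLt d Q →
    DegLt d (fun n => P n + Q n) := by
  intro d
  induction d with
  | zero => intro P Q hP hQ n; simp [hP n, hQ n]
  | succ d ih =>
    intro P Q hP hQ h
    exact DegLt_congr (fun n => by simp [ddZ]; ring) (ih (hP h) (hQ h))

lemma DegLt_neg : ∀ {d : ℕ} {P : ℕ → ℤ}, DegLt d P → DegLt d (fun n => -(P n)) := by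
  intro d
  induction d with
  | zero => intro P hP n; simp [hP n]
  | succ d ih =>
    intro P hP h
    exact DegLt_congr (fun n => by simp [ddZ]; ring) (ih (hP h))

lemma DegLt_shift : ∀ {d : ℕ} {P : ℕ → ℤ} (l : ℕ), DegLt d P →
    DegLt d (fun n => P (n + l)) := by
  intro d
  induction d with
  | zero => intro P l hP n; exact hP (n + l)
  | succ d ih =>
    intro P l hP h
    refine DegLt_congr (fun n => ?_) (ih l (hP h))
    show ddZ h P (n + l) = ddZ h (fun n => P (n + l)) n
    simp only [ddZ]
    rw [show n + l + h = n + h + l by omega]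

lemma DegLt_choose : ∀ i : ℕ, DegLt (i + 1) (fun n => (n.choose i : ℤ)) := by
  intro i
  induction i with
  | zero =>
    intro h n
    simp [ddZ]
  | succ i ih =>
    have key : ∀ h n : ℕ, ddZ h (fun n => (n.choose (i + 1) : ℤ)) n =
        ∑ l ∈ Finset.range h, ((n + l).choose i : ℤ) := by
      intro h
      induction h with
      | zero => intro n; simp [ddZ]
      | succ h ihh =>
        intro n
        rw [Finset.sum_range_succ, ← ihh n]
        simp only [ddZ]
        rw [show n + (h + 1) = (n + h) + 1 by omega, Nat.choose_succ_succ (n + h) i]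
        push_cast
        ring
    intro h
    have hsum : DegLt (i + 1) (fun n => ∑ l ∈ Finset.range h, ((n + l).choose i : ℤ)) := by
      induction h with
      | zero => exact DegLt_congr (fun n => by simp) (DegLt_zero_fun (i + 1))
      | succ h ihh =>
        exact DegLt_congr (fun n => (Finset.sum_range_succ _ h).symm)
          (DegLt_add ihh (DegLt_shift h ih))
    exact DegLt_congr (fun n => (key h n).symm) hsum

lemma polypow : ∀ (d i : ℕ), d ≤ i + 1 → ∀ u : H, u ∈ Gm H i → ∀ P : ℕ → ℤ,
    DegLt d P → isS (i + 1 - d) (fun n => u ^ P n) := by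
  intro d
  induction d with
  | zero =>
    intro i _ u hu P hP
    refine isS_congr (fun n => ?_) (isS_one _)
    show (1 : H) = u ^ P n
    rw [hP n, zpow_zero]
  | succ d ihd =>
    intro i hd u hu P hP
    refine isS_of_dd (fun n => Gm_anti (by omega) (Subgroup.zpow_mem _ hu _)) ?_
    intro h
    have step := ihd i (by omega) u hu _ (hP h)
    have e2 : i + 1 - d = (i + 1 - (d + 1)) + 1 := by omega
    rw [e2] at step
    refine isS_congr (fun n => ?_) step
    show u ^ ddZ h P n = dd h (fun n => u ^ P n) n
    simp only [dd, ddZ]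
    rw [sub_eq_neg_add, zpow_add, zpow_neg]

/-! ### The Hall–Petrescu representation -/

def Ff (x y : H) : ℕ → H := fun n => (x ^ n * y ^ n)⁻¹ * (x * y) ^ n

def Rf (x y : H) : ℕ → ℕ → H
  | 0 => Ff x y
  | (m + 1) => fun n => ((Rf x y m (m + 1)) ^ (n.choose (m + 1)))⁻¹ * Rf x y m n

def PP (x y : H) : ℕ → ℕ → H
  | 0 => fun _ => 1
  | (m + 1) => fun n => PP x y m n * (Rf x y m (m + 1)) ^ (n.choose (m + 1))

lemma Ff_def (x y : H) (n : ℕ) : Ff x y n = (x ^ n * y ^ n)⁻¹ * (x * y) ^ n := rfl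

lemma Rf_zero (x y : H) : Rf x y 0 = Ff x y := rfl

lemma Rf_succ (x y : H) (m : ℕ) : Rf x y (m + 1) =
    fun n => ((Rf x y m (m + 1)) ^ (n.choose (m + 1)))⁻¹ * Rf x y m n := rfl

lemma PP_zero (x y : H) (n : ℕ) : PP x y 0 n = 1 := rfl

lemma PP_succ (x y : H) (m n : ℕ) :
    PP x y (m + 1) n = PP x y m n * (Rf x y m (m + 1)) ^ (n.choose (m + 1)) := rfl

lemma Rf_vanish (x y : H) : ∀ m l, l ≤ m → Rf x y m l = 1 := by
  intro m
  induction m with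
  | zero =>
    intro l hl
    have : l = 0 := by omega
    subst this
    show Ff x y 0 = 1
    simp [Ff_def]
  | succ m ih =>
    intro l hl
    show ((Rf x y m (m + 1)) ^ (l.choose (m + 1)))⁻¹ * Rf x y m l = 1
    rcases Nat.lt_or_ge l (m + 1) with h1 | h1
    · rw [Nat.choose_eq_zero_of_lt h1, pow_zero, inv_one, one_mul]
      exact ih l (by omega)
    · have h2 : l = m + 1 := by omega
      subst h2
      rw [Nat.choose_self, pow_one]
      simp

lemma telescope (x y : H) : ∀ m n, Ff x y n = PP x y m n * Rf x y m n := by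
  intro m
  induction m with
  | zero =>
    intro n
    rw [PP_zero, one_mul, Rf_zero]
  | succ m ih =>
    intro n
    rw [PP_succ]
    have e : Rf x y (m + 1) n = ((Rf x y m (m + 1)) ^ (n.choose (m + 1)))⁻¹ * Rf x y m n := rfl
    rw [e, ih n]
    group

lemma iterD_replicate (R : ℕ → H) : ∀ (i a : ℕ), (∀ l, a ≤ l → l < a + i → R l = 1) →
    iterD (List.replicate i 1) R a = R (a + i) := by
  intro i
  induction i generalizing R with
  | zero => intro a _; rfl
  | succ i ih =>
    intro a hv
    rw [List.replicate_succ]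
    show iterD (List.replicate i 1) (dd 1 R) a = R (a + (i + 1))
    rw [ih (dd 1 R) a (by
      intro l hl1 hl2
      show (R l)⁻¹ * R (l + 1) = 1
      rw [hv l (by omega) (by omega), hv (l + 1) (by omega) (by omega)]
      simp)]
    show (R (a + i))⁻¹ * R (a + i + 1) = R (a + (i + 1))
    rw [hv (a + i) (by omega) (by omega), inv_one, one_mul]
    exact congrArg R (by omega)

theorem rep (c : ℕ) (hc : lowerCentralSeries H c = ⊥) (x y : H) :
    (∀ n, Ff x y n = PP x y c n) ∧ (∀ m, Rf x y m (m + 1) ∈ Gm H (m + 1)) := by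
  have PKG := master c H hc
  have hGm1 : Gm H 1 = ⊤ := by
    rw [Gm_eq, show (1 : ℕ) - 1 = 0 from rfl, lowerCentralSeries_zero]
  have hxp : ∀ g : H, isS 0 (fun n => g ^ n) := by
    intro g
    have h1 : DegLt 2 (fun n => (n : ℤ)) := by
      intro h h' n
      simp only [ddZ]
      push_cast
      ring
    have h2 : g ∈ Gm H 1 := by rw [hGm1]; exact Subgroup.mem_top g
    have h3 := polypow 2 1 (by omega) g h2 _ h1
    exact isS_congr (fun n => by rw [zpow_natCast]) h3
  have hFf : isS 0 (Ff x y) := by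
    have h1 := (PKG 0).1 _ _ ((PKG 0).1 _ _ (hxp y⁻¹) (hxp x⁻¹)) (hxp (x * y))
    refine isS_congr (fun n => ?_) h1
    show ((y⁻¹ : H) ^ n * (x⁻¹) ^ n) * (x * y) ^ n = Ff x y n
    rw [Ff_def, mul_inv_rev, inv_pow, inv_pow]
  have main : ∀ m, isS 0 (Rf x y m) ∧ Rf x y m (m + 1) ∈ Gm H (m + 1) := by
    intro m
    induction m with
    | zero =>
      refine ⟨hFf, ?_⟩
      rw [hGm1]
      exact Subgroup.mem_top _
    | succ m ih =>
      have hS : isS 0 (Rf x y (m + 1)) := by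
        have hdeg : DegLt (m + 2) (fun n => -(n.choose (m + 1) : ℤ)) :=
          DegLt_neg (DegLt_choose (m + 1))
        have hpow := polypow (m + 2) (m + 1) (by omega) _ ih.2 _ hdeg
        have e2 : (m + 1) + 1 - (m + 2) = 0 := by omega
        rw [e2] at hpow
        have hpow2 : isS 0 (fun n => ((Rf x y m (m + 1)) ^ (n.choose (m + 1)))⁻¹) := by
          refine isS_congr (fun n => ?_) hpow
          show Rf x y m (m + 1) ^ (-(n.choose (m + 1) : ℤ)) =
            ((Rf x y m (m + 1)) ^ (n.choose (m + 1)))⁻¹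
          rw [zpow_neg, zpow_natCast]
        exact isS_congr (fun n => rfl) ((PKG 0).1 _ _ hpow2 ih.1)
      refine ⟨hS, ?_⟩
      have h1 := iterD_replicate (Rf x y (m + 1)) (m + 2) 0
        (fun l _ hl => Rf_vanish x y (m + 1) l (by omega))
      have h2 := hS (List.replicate (m + 2) 1) 0
      rw [List.length_replicate] at h2
      rw [h1] at h2
      simpa using h2
  have term : ∀ n, Rf x y c n = 1 := by
    intro n
    induction n using Nat.strong_induction_on with
    | _ n IH =>
      rcases Nat.lt_or_ge c n with hn | hn
      · have h1 := iterD_replicate (Rf x y c) (c + 1) (n - (c + 1))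
          (fun l h0 hl => IH l (by omega))
        have h2 := (main c).1 (List.replicate (c + 1) 1) (n - (c + 1))
        rw [List.length_replicate, h1] at h2
        have e1 : n - (c + 1) + (c + 1) = n := by omega
        rw [e1] at h2
        have e3 : Gm H ((c + 1) + 0) = ⊥ := by
          rw [Gm_eq, show (c + 1) + 0 - 1 = c by omega, hc]
        rw [e3] at h2
        simpa using h2
      · exact Rf_vanish x y c n hn
  refine ⟨fun n => ?_, fun m => (main m).2⟩
  have := telescope x y c n
  rwa [term n, mul_one] at this

end HallCollect

section SpowLemmas

theorem spow_normal {G : Type*} [Group G] {K : Subgroup G} (hK : K.Normal) (n : ℕ) :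
    (spow K n).Normal := by
  constructor
  intro w hw g
  unfold spow at hw ⊢
  refine Subgroup.closure_induction ?_ ?_ ?_ ?_ hw
  · rintro v ⟨h, hh, rfl⟩
    exact Subgroup.subset_closure ⟨g * h * g⁻¹, hK.conj_mem h hh g, conj_pow.symm⟩
  · have e : g * (1 : G) * g⁻¹ = 1 := by group
    rw [e]
    exact Subgroup.one_mem _
  · intro a b _ _ ha hb
    have e : g * (a * b) * g⁻¹ = (g * a * g⁻¹) * (g * b * g⁻¹) := by group
    rw [e]
    exact mul_mem ha hb
  · intro a _ ha
    have e : g * a⁻¹ * g⁻¹ = (g * a * g⁻¹)⁻¹ := by group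
    rw [e]
    exact inv_mem ha

theorem spow_map {G G' : Type*} [Group G] [Group G'] (f : G →* G') (K : Subgroup G) (n : ℕ) :
    Subgroup.map f (spow K n) = spow (Subgroup.map f K) n := by
  unfold spow
  rw [MonoidHom.map_closure]
  congr 1
  ext v
  constructor
  · rintro ⟨w, ⟨h, hh, rfl⟩, rfl⟩
    exact ⟨f h, Subgroup.mem_map_of_mem f hh, map_pow f h n⟩
  · rintro ⟨w, ⟨h, hh, rfl⟩, rfl⟩
    exact ⟨h ^ n, ⟨h, hh, rfl⟩, map_pow f h n⟩

end SpowLemmas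

/-- **P. Hall's collection formula.** For elements `x, y` of a finite `p`-group `G`
and `k ≥ 0`, `(xy)^{p^k} ≡ x^{p^k} y^{p^k}` modulo
`γ_2(L)^{p^k} γ_p(L)^{p^{k-1}} γ_{p²}(L)^{p^{k-2}} ⋯ γ_{p^k}(L)`, where `L = ⟨x, y⟩`.
(The `i`-th factor, `0 ≤ i ≤ k`, is `γ_2(L)^{p^k}` for `i = 0` and
`γ_{p^i}(L)^{p^{k-i}}` for `i ≥ 1`; `γ_j(L) = lowerCentralSeries L (j-1)`, and the
product of these subgroups, each normal in `L`, is their join.) -/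
theorem hall_collection_formula (p : ℕ) (hp : p.Prime) (G : Type*) [Group G] [Finite G]
    (hG : IsPGroup p G) (x y : G) (k : ℕ) :
    (x * y) ^ p ^ k * (x ^ p ^ k * y ^ p ^ k)⁻¹ ∈
      ⨆ i ∈ Finset.range (k + 1),
        spow (Subgroup.map (Subgroup.closure {x, y}).subtype
            (Subgroup.lowerCentralSeries (⊤ : Subgroup ↥(Subgroup.closure {x, y}))
              (if i = 0 then 1 else p ^ i - 1)))
          (p ^ (k - i)) := by
  classical
  haveI : Fact p.Prime := ⟨hp⟩
  set L := Subgroup.closure ({x, y} : Set G) with hLdef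
  have hxL : x ∈ L := Subgroup.subset_closure (Set.mem_insert x {y})
  have hyL : y ∈ L := Subgroup.subset_closure (Set.mem_insert_of_mem x rfl)
  set x' : ↥L := ⟨x, hxL⟩ with hx'def
  set y' : ↥L := ⟨y, hyL⟩ with hy'def
  have hnil : Group.IsNilpotent ↥L := (hG.to_subgroup L).isNilpotent
  obtain ⟨c, hc⟩ := nilpotent_iff_lowerCentralSeries.mp hnil
  obtain ⟨htel, humem⟩ := HallCollect.rep c hc x' y'
  have hu1 : HallCollect.Rf x' y' 0 1 = 1 := by
    rw [HallCollect.Rf_zero, HallCollect.Ff_def]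
    simp only [pow_one]
    group
  set NL : Subgroup ↥L := ⨆ i ∈ Finset.range (k + 1),
    spow (HallCollect.lowerCentralSeries ↥L (if i = 0 then 1 else p ^ i - 1)) (p ^ (k - i)) with hNL
  have hNLle : ∀ i (hi : i ∈ Finset.range (k + 1)),
      spow (HallCollect.lowerCentralSeries ↥L (if i = 0 then 1 else p ^ i - 1)) (p ^ (k - i)) ≤ NL := by
    intro i hi
    rw [hNL]
    exact le_iSup₂ (f := fun i (_ : i ∈ Finset.range (k + 1)) =>
      spow (HallCollect.lowerCentralSeries ↥L (if i = 0 then 1 else p ^ i - 1)) (p ^ (k - i))) i hi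
  have hNLnormal : NL.Normal := by
    constructor
    intro w hw g
    rw [hNL] at hw
    refine Subgroup.iSup_induction _ (C := fun w => g * w * g⁻¹ ∈ NL) hw ?_ ?_ ?_
    · intro i v hv
      by_cases hi : i ∈ Finset.range (k + 1)
      · rw [iSup_pos hi] at hv
        have hnorm : (spow (HallCollect.lowerCentralSeries ↥L (if i = 0 then 1 else p ^ i - 1))
            (p ^ (k - i))).Normal := spow_normal inferInstance _
        exact hNLle i hi (hnorm.conj_mem v hv g)
      · rw [iSup_neg hi] at hv
        have hv1 : v = 1 := by simpa using hv
        show g * v * g⁻¹ ∈ NL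
        rw [hv1]
        have e : g * (1 : ↥L) * g⁻¹ = 1 := by group
        rw [e]
        exact NL.one_mem
    · show g * (1 : ↥L) * g⁻¹ ∈ NL
      have e : g * (1 : ↥L) * g⁻¹ = 1 := by group
      rw [e]
      exact NL.one_mem
    · intro a b ha hb
      show g * (a * b) * g⁻¹ ∈ NL
      have e : g * (a * b) * g⁻¹ = (g * a * g⁻¹) * (g * b * g⁻¹) := by group
      rw [e]
      exact mul_mem ha hb
  have fmem : ∀ i u_, 2 ≤ i → u_ ∈ HallCollect.lowerCentralSeries ↥L (i - 1) →
      u_ ^ ((p ^ k).choose i) ∈ NL := by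
    intro i u hi hu
    rcases Nat.lt_or_ge (p ^ k) i with hik | hik
    · rw [Nat.choose_eq_zero_of_lt hik, pow_zero]
      exact NL.one_mem
    · set j := i.factorization p with hjdef
      have hi0 : i ≠ 0 := by omega
      have hpj_dvd : p ^ j ∣ i := Nat.ordProj_dvd i p
      have hpj_le : p ^ j ≤ i := Nat.le_of_dvd (by omega) hpj_dvd
      have hjk : j ≤ k := by
        have h1 : p ^ j ≤ p ^ k := le_trans hpj_le hik
        exact (Nat.pow_le_pow_iff_right hp.one_lt).mp h1
      have hdvd : p ^ (k - j) ∣ (p ^ k).choose i := by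
        have hkey : p ^ k * (p ^ k - 1).choose (i - 1) = (p ^ k).choose i * i := by
          have h0 := Nat.add_one_mul_choose_eq (p ^ k - 1) (i - 1)
          have hpk : 0 < p ^ k := pow_pos hp.pos k
          have e1 : p ^ k - 1 + 1 = p ^ k := by omega
          have e2 : i - 1 + 1 = i := by omega
          rw [e1, e2] at h0
          exact h0
        have h2 : p ^ k ∣ (p ^ k).choose i * i := ⟨(p ^ k - 1).choose (i - 1), hkey.symm⟩
        have h3 : (p ^ k).choose i * i = ((p ^ k).choose i * (i / p ^ j)) * p ^ j := by
          rw [mul_assoc]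
          congr 1
          rw [mul_comm]
          exact (Nat.ordProj_mul_ordCompl_eq_self i p).symm
        rw [h3] at h2
        have h4 : p ^ (k - j) * p ^ j ∣ ((p ^ k).choose i * (i / p ^ j)) * p ^ j := by
          rwa [← pow_add, Nat.sub_add_cancel hjk]
        have h5 : p ^ (k - j) ∣ (p ^ k).choose i * (i / p ^ j) :=
          (Nat.mul_dvd_mul_iff_right (pow_pos hp.pos j)).mp h4
        have hcop : Nat.Coprime (p ^ (k - j)) (i / p ^ j) :=
          Nat.Coprime.pow_left _ (hp.coprime_iff_not_dvd.mpr (Nat.not_dvd_ordCompl hp hi0))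
        exact hcop.dvd_of_dvd_mul_right h5
      obtain ⟨t, ht⟩ := hdvd
      have hjr : j ∈ Finset.range (k + 1) := Finset.mem_range.mpr (by omega)
      refine hNLle j hjr ?_
      have hmem2 : u ∈ HallCollect.lowerCentralSeries ↥L (if j = 0 then 1 else p ^ j - 1) := by
        by_cases hj0 : j = 0
        · rw [if_pos hj0]
          exact HallCollect.lowerCentralSeries_antitone (by omega) hu
        · rw [if_neg hj0]
          exact HallCollect.lowerCentralSeries_antitone (by omega) hu
      rw [ht, mul_comm (p ^ (k - j)) t, pow_mul]
      exact Subgroup.subset_closure ⟨u ^ t, Subgroup.pow_mem _ hmem2 t, rfl⟩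
  have hPP : ∀ m, HallCollect.PP x' y' m (p ^ k) ∈ NL := by
    intro m
    induction m with
    | zero =>
      rw [HallCollect.PP_zero]
      exact NL.one_mem
    | succ m ih =>
      rw [HallCollect.PP_succ]
      refine mul_mem ih ?_
      rcases Nat.eq_zero_or_pos m with hm | hm
      · subst hm
        rw [hu1, one_pow]
        exact NL.one_mem
      · refine fmem (m + 1) _ (by omega) ?_
        have h := humem m
        rwa [HallCollect.Gm_eq] at h
  have hzmem : (x' * y') ^ p ^ k * (x' ^ p ^ k * y' ^ p ^ k)⁻¹ ∈ NL := by
    have e : (x' * y') ^ p ^ k * (x' ^ p ^ k * y' ^ p ^ k)⁻¹ =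
        (x' ^ p ^ k * y' ^ p ^ k) * HallCollect.Ff x' y' (p ^ k) *
          (x' ^ p ^ k * y' ^ p ^ k)⁻¹ := by
      rw [HallCollect.Ff_def]
      group
    rw [e, htel (p ^ k)]
    exact hNLnormal.conj_mem _ (hPP c) _
  have hmap : Subgroup.map L.subtype NL = ⨆ i ∈ Finset.range (k + 1),
      spow (Subgroup.map L.subtype (HallCollect.lowerCentralSeries ↥L (if i = 0 then 1 else p ^ i - 1)))
        (p ^ (k - i)) := by
    rw [hNL]
    rw [(Subgroup.gc_map_comap L.subtype).l_iSup]
    refine iSup_congr fun i => ?_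
    rw [(Subgroup.gc_map_comap L.subtype).l_iSup]
    exact iSup_congr fun hi => spow_map L.subtype _ _
  have final := Subgroup.mem_map_of_mem L.subtype hzmem
  rw [hmap] at final
  have ecoe : L.subtype ((x' * y') ^ p ^ k * (x' ^ p ^ k * y' ^ p ^ k)⁻¹) =
      (x * y) ^ p ^ k * (x ^ p ^ k * y ^ p ^ k)⁻¹ := by
    simp only [map_mul, map_pow, map_inv]
    rfl
  rwa [ecoe] at final
end

section
/- Let p be a prime, G a finite p-group, and x, y elements of G. Then for any k ≥ 0, [x,y]^{p^k} ≡ [x^{p^k}, y] modulo the subgroup γ_2(M)^{p^k} γ_p(M)^{p^{k-1}} γ_{p^2}(M)^{p^{k-2}} ⋯ γ_{p^k}(M), where M = ⟨x, [x,y]⟩. -/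
/-!
In a nilpotent group `H`, consider sequences `ℕ → H` built from `n ↦ h ^ C(n, j)` with `h` deep
in the lower central series compared with the degree `j`. The commutator of two such sequences
lies one level below the sum of their levels and has at most the sum of their degrees, and the
partial products `n ↦ f 0 * ⋯ * f (n - 1)` raise the degree by one. The two facts depend on each
other, so we prove them together by downward induction on the level, which works because the
lower central series reaches `1`. It follows that `(a * b) ^ n = F n * a ^ n * b ^ n` with `F`
of this polynomial shape.

At `n = p ^ k` a generator with `1 ≤ j` and `h ∈ γ_j ∩ γ_2` contributes `h ^ C(p ^ k, j)`. Since
`p ^ (k - v_p(j))` divides `C(p ^ k, j)` and `γ_j ≤ γ_{p ^ v_p(j)}`, this lies in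
`γ_{p^i}^{p^(k-i)}` for `i = v_p(j)` (in `γ_2^{p^k}` when `i = 0`). Finally take `a = x` and
`b = [x, y]`: from `x [x, y] = y⁻¹ x y` we get `[x ^ p ^ k, y] = x ^ (-p ^ k) * (a * b) ^ p ^ k`.
-/

open scoped commutatorElement

theorem commutatorElement_mul_mul {G : Type*} [Group G] (a b c d : G) :
    ⁅a * b, c * d⁆ = a * ⁅b, c * d⁆ * a⁻¹ * ⁅a, c⁆ * (c * ⁅a, d⁆ * c⁻¹) := by
  simp only [commutatorElement_def]; group

namespace Subgroup

variable {G : Type*} [Group G]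

theorem commutator_commutator_le_of_rotate {H₁ H₂ H₃ N : Subgroup G} [N.Normal]
    (h1 : ⁅⁅H₂, H₃⁆, H₁⁆ ≤ N) (h2 : ⁅⁅H₃, H₁⁆, H₂⁆ ≤ N) : ⁅⁅H₁, H₂⁆, H₃⁆ ≤ N := by
  simp only [← QuotientGroup.ker_mk' N, ← map_eq_bot_iff, map_commutator] at h1 h2 ⊢
  exact commutator_commutator_eq_bot_of_rotate h1 h2

theorem commutator_lowerCentralSeries_le (i j : ℕ) :
    ⁅(⊤ : Subgroup G).lowerCentralSeries i, (⊤ : Subgroup G).lowerCentralSeries j⁆ ≤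
      (⊤ : Subgroup G).lowerCentralSeries (i + j + 1) := by
  induction j generalizing i with
  | zero => exact le_rfl
  | succ j ih =>
    rw [lowerCentralSeries_succ, commutator_comm (lowerCentralSeries ⊤ i)]
    refine commutator_commutator_le_of_rotate ?_ ?_
    · rw [commutator_comm ⊤, ← lowerCentralSeries_succ,
        show i + (j + 1) + 1 = i + 1 + j + 1 by omega]
      exact ih (i + 1)
    · exact commutator_mono (ih i) le_rfl

theorem commutatorElement_mem_of_mem_closure {N : Subgroup G} {S : Set G} {g : G}
    (hS : closure S ≤ normalizer (N : Set G)) (h : ∀ s ∈ S, ⁅s, g⁆ ∈ N) {x : G}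
    (hx : x ∈ closure S) : ⁅x, g⁆ ∈ N := by
  induction hx using closure_induction with
  | mem s hs => exact h s hs
  | one => simp
  | mul a b ha _ iha ihb =>
    rw [show ⁅a * b, g⁆ = a * ⁅b, g⁆ * a⁻¹ * ⁅a, g⁆ by simp only [commutatorElement_def]; group]
    exact mul_mem ((mem_normalizer_iff.mp (hS ha) _).mp ihb) iha
  | inv a ha iha =>
    rw [show ⁅a⁻¹, g⁆ = a⁻¹ * ⁅a, g⁆⁻¹ * a⁻¹⁻¹ by simp only [commutatorElement_def]; group]
    exact (mem_normalizer_iff.mp (hS (inv_mem ha)) _).mp (inv_mem iha)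

theorem commutator_closure_le_s14 {N : Subgroup G} {S T : Set G}
    (hS : closure S ≤ normalizer (N : Set G)) (hT : closure T ≤ normalizer (N : Set G))
    (h : ∀ s ∈ S, ∀ t ∈ T, ⁅s, t⁆ ∈ N) : ⁅closure S, closure T⁆ ≤ N := by
  refine commutator_le.mpr fun x hx y hy =>
    commutatorElement_mem_of_mem_closure hS (fun s hs => ?_) hx
  rw [← commutatorElement_inv]
  refine inv_mem (commutatorElement_mem_of_mem_closure hT (fun t ht => ?_) hy)
  rw [← commutatorElement_inv]
  exact inv_mem (h s hs t ht)

end Subgroup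

instance spow_normal_s14 {G : Type*} [Group G] (N : Subgroup G) [N.Normal] (n : ℕ) :
    (spow N n).Normal := by
  refine ⟨fun x hx g => ?_⟩
  induction hx using Subgroup.closure_induction with
  | mem _ hx =>
    obtain ⟨h, hh, rfl⟩ := hx
    exact Subgroup.subset_closure ⟨g * h * g⁻¹, Subgroup.Normal.conj_mem ‹_› h hh g, conj_pow.symm⟩
  | one => simp
  | mul a b _ _ ha hb =>
    rw [show g * (a * b) * g⁻¹ = g * a * g⁻¹ * (g * b * g⁻¹) by group]
    exact mul_mem ha hb
  | inv a _ ha =>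
    rw [show g * a⁻¹ * g⁻¹ = (g * a * g⁻¹)⁻¹ by group]
    exact inv_mem ha

theorem map_spow_le {G K : Type*} [Group G] [Group K] (φ : G →* K) (N : Subgroup G) (n : ℕ) :
    (spow N n).map φ ≤ spow (N.map φ) n := by
  rw [spow, MonoidHom.map_closure]
  refine Subgroup.closure_mono ?_
  rintro _ ⟨_, ⟨h, hh, rfl⟩, rfl⟩
  exact ⟨φ h, Subgroup.mem_map_of_mem φ hh, map_pow φ h n⟩

/-- `γ_2(H)^{p^k} γ_p(H)^{p^{k-1}} γ_{p^2}(H)^{p^{k-2}} ⋯ γ_{p^k}(H)`, where `γ_{j}` is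
`lowerCentralSeries ⊤ (j - 1)`. -/
def hallSubgroup (H : Type*) [Group H] (p k : ℕ) : Subgroup H :=
  ⨆ i ∈ Finset.range (k + 1),
    spow ((⊤ : Subgroup H).lowerCentralSeries (if i = 0 then 1 else p ^ i - 1)) (p ^ (k - i))

instance hallSubgroup_normal (H : Type*) [Group H] (p k : ℕ) : (hallSubgroup H p k).Normal := by
  unfold hallSubgroup; infer_instance

theorem map_hallSubgroup_le {H G : Type*} [Group H] [Group G] (φ : H →* G) (p k : ℕ) :
    (hallSubgroup H p k).map φ ≤
      ⨆ i ∈ Finset.range (k + 1),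
        spow (((⊤ : Subgroup H).lowerCentralSeries (if i = 0 then 1 else p ^ i - 1)).map φ)
          (p ^ (k - i)) := by
  rw [hallSubgroup, Subgroup.map_iSup]
  refine iSup_mono fun i => ?_
  rw [Subgroup.map_iSup]
  exact iSup_mono fun _ => map_spow_le φ _ _

theorem comm'_pow_left {G : Type*} [Group G] (x y : G) (n : ℕ) :
    comm' (x ^ n) y = (x ^ n)⁻¹ * (x * comm' x y) ^ n := by
  rw [show x * comm' x y = y⁻¹ * x * y⁻¹⁻¹ by simp only [comm']; group, conj_pow]
  simp only [comm']; group

namespace HallCollection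

variable {H : Type*} [Group H]

local notation "γ" => Subgroup.lowerCentralSeries (⊤ : Subgroup _)

def binomialPow (h : H) (j : ℕ) : ℕ → H := fun n => h ^ n.choose j

theorem binomialPow_inv (h : H) (j : ℕ) : (binomialPow h j)⁻¹ = binomialPow h⁻¹ j := by
  funext n; simp [binomialPow, inv_pow]

def partialProd (f : ℕ → H) (n : ℕ) : H := ((List.range n).map f).prod

@[simp] theorem partialProd_zero (f : ℕ → H) : partialProd f 0 = 1 := rfl

theorem partialProd_succ (f : ℕ → H) (n : ℕ) :
    partialProd f (n + 1) = partialProd f n * f n :=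
  List.prod_range_succ f n

@[simp] theorem partialProd_one : partialProd (1 : ℕ → H) = 1 := by
  funext n; induction n with
  | zero => rfl
  | succ n ih => rw [partialProd_succ, ih]; simp

theorem partialProd_binomialPow (h : H) (j : ℕ) :
    partialProd (binomialPow h j) = binomialPow h (j + 1) := by
  funext n; induction n with
  | zero => simp [binomialPow]
  | succ n ih =>
    rw [partialProd_succ, ih, binomialPow, binomialPow, binomialPow, Nat.choose_succ_succ',
      pow_add, pow_mul_comm]

theorem partialProd_mul (g r : ℕ → H) (n : ℕ) :
    partialProd (g * r) n =
      partialProd (fun m => partialProd g (m + 1) * r m * (partialProd g (m + 1))⁻¹) n *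
        partialProd g n := by
  induction n with
  | zero => simp
  | succ n ih => simp only [partialProd_succ, ih, Pi.mul_apply]; group

theorem eq_partialProd_of_succ_eq {F E E' : ℕ → H} (hF : ∀ n, F (n + 1) = E n * F n * E' n)
    (n : ℕ) : F n = (partialProd E⁻¹ n)⁻¹ * F 0 * partialProd E' n := by
  induction n with
  | zero => simp
  | succ n ih => rw [hF, ih, partialProd_succ, partialProd_succ, Pi.inv_apply]; group

/-- Generated by the sequences `n ↦ h ^ C(n, j)` with `h ∈ γ m` (the paper's `γ_{m+1}`),
`l ≤ m` and `j + t ≤ m + 1`. -/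
def polySeq (H : Type*) [Group H] (l t : ℕ) : Subgroup (ℕ → H) :=
  Subgroup.closure {f | ∃ m j, ∃ h ∈ γ m, l ≤ m ∧ j + t ≤ m + 1 ∧ binomialPow h j = f}

theorem binomialPow_mem_polySeq {l t m j : ℕ} {h : H} (hh : h ∈ γ m) (hl : l ≤ m)
    (hj : j + t ≤ m + 1) : binomialPow h j ∈ polySeq H l t :=
  Subgroup.subset_closure ⟨m, j, h, hh, hl, hj, rfl⟩

theorem const_mem_polySeq {l t m : ℕ} {h : H} (hh : h ∈ γ m) (hl : l ≤ m) (ht : t ≤ m + 1) :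
    (fun _ => h) ∈ polySeq H l t := by
  have : binomialPow h 0 = fun _ => h := funext fun n => by simp [binomialPow]
  exact this ▸ binomialPow_mem_polySeq hh hl (by omega)

theorem polySeq_anti {l t l' t' : ℕ} (hl : l' ≤ l) (ht : t' ≤ t) :
    polySeq H l t ≤ polySeq H l' t' :=
  Subgroup.closure_mono fun _ ⟨m, j, h, hh, hm, hj, hf⟩ =>
    ⟨m, j, h, hh, hl.trans hm, by omega, hf⟩

theorem polySeq_eq_bot {c l t : ℕ} (hc : γ c = (⊥ : Subgroup H)) (hl : c ≤ l) :
    polySeq H l t = ⊥ := by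
  refine Subgroup.closure_eq_bot_iff.mpr ?_
  rintro _ ⟨m, j, h, hh, hm, -, rfl⟩
  have : h = 1 := by simpa [hc] using Subgroup.lowerCentralSeries_antitone ⊤ (hl.trans hm) hh
  funext n; simp [binomialPow, this]

theorem exists_binomialPow_succ_eq {l t m j : ℕ} {h : H} (hh : h ∈ γ m) (hl : l ≤ m)
    (hj : j + t ≤ m + 1) :
    ∃ u ∈ polySeq H l (t + 1), ∀ n, binomialPow h j (n + 1) = binomialPow h j n * u n := by
  cases j with
  | zero => exact ⟨1, one_mem _, fun n => by simp [binomialPow]⟩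
  | succ j =>
    refine ⟨binomialPow h j, binomialPow_mem_polySeq hh hl (by omega), fun n => ?_⟩
    rw [binomialPow, binomialPow, binomialPow, Nat.choose_succ_succ', pow_add, pow_mul_comm]

def CommutatorBound (H : Type*) [Group H] (s : ℕ) : Prop :=
  ∀ l₁ l₂ t₁ t₂, s ≤ l₁ + l₂ →
    ⁅polySeq H l₁ t₁, polySeq H l₂ t₂⁆ ≤ polySeq H (l₁ + l₂ + 1) (t₁ + t₂)

def PartialProdBound (H : Type*) [Group H] (l : ℕ) : Prop :=
  ∀ l' t, l ≤ l' → ∀ f ∈ polySeq H l' (t + 1), partialProd f ∈ polySeq H l' t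

theorem CommutatorBound.mono {s s' : ℕ} (hC : CommutatorBound H s) (hs : s ≤ s') :
    CommutatorBound H s' :=
  fun l₁ l₂ t₁ t₂ hl => hC l₁ l₂ t₁ t₂ (hs.trans hl)

theorem CommutatorBound.polySeq_le_normalizer {l : ℕ} (hC : CommutatorBound H l)
    (t l' t' : ℕ) : polySeq H l' t' ≤ Subgroup.normalizer (polySeq H l t : Set (ℕ → H)) :=
  Subgroup.le_normalizer_iff_commutator_le_left.mpr <|
    (hC l l' t t' le_self_add).trans (polySeq_anti (by omega) le_self_add)

theorem PartialProdBound.mem_of_succ_eq {l t : ℕ} (hP : PartialProdBound H l) {F E E' : ℕ → H}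
    (hE : E ∈ polySeq H l (t + 1)) (hE' : E' ∈ polySeq H l (t + 1)) (h0 : F 0 ∈ γ l)
    (ht : t ≤ l + 1) (hF : ∀ n, F (n + 1) = E n * F n * E' n) : F ∈ polySeq H l t := by
  rw [show F = (partialProd E⁻¹)⁻¹ * (fun _ => F 0) * partialProd E' from
    funext (eq_partialProd_of_succ_eq hF)]
  exact mul_mem (mul_mem (inv_mem (hP l t le_rfl _ (inv_mem hE)))
    (const_mem_polySeq h0 le_rfl ht)) (hP l t le_rfl _ hE')

theorem commutator_binomialPow_mem {l₁ l₂ t₁ t₂ i j : ℕ} {h₁ h₂ : H}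
    (hP : PartialProdBound H (l₁ + l₂ + 1)) (hC : CommutatorBound H (l₁ + l₂ + 1))
    (ih₁ : ⁅polySeq H l₁ (t₁ + 1), polySeq H l₂ t₂⁆ ≤ polySeq H (l₁ + l₂ + 1) (t₁ + 1 + t₂))
    (ih₂ : ⁅polySeq H l₁ t₁, polySeq H l₂ (t₂ + 1)⁆ ≤ polySeq H (l₁ + l₂ + 1) (t₁ + (t₂ + 1)))
    (hh₁ : h₁ ∈ γ l₁) (hh₂ : h₂ ∈ γ l₂) (hi : i + t₁ ≤ l₁ + 1) (hj : j + t₂ ≤ l₂ + 1) :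
    ⁅binomialPow h₁ i, binomialPow h₂ j⁆ ∈ polySeq H (l₁ + l₂ + 1) (t₁ + t₂) := by
  obtain ⟨u, hu, hxu⟩ := exists_binomialPow_succ_eq hh₁ le_rfl hi
  obtain ⟨v, hv, hyv⟩ := exists_binomialPow_succ_eq hh₂ le_rfl hj
  set x := binomialPow h₁ i
  set y := binomialPow h₂ j
  have hx : x ∈ polySeq H l₁ t₁ := binomialPow_mem_polySeq hh₁ le_rfl hi
  have hy : y ∈ polySeq H l₂ t₂ := binomialPow_mem_polySeq hh₂ le_rfl hj
  have hyv_mem : y * v ∈ polySeq H l₂ t₂ := mul_mem hy (polySeq_anti le_rfl t₂.le_succ hv)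
  have hnorm := hC.polySeq_le_normalizer (t₁ + t₂ + 1) 0 0
  have hE : x * ⁅u, y * v⁆ * x⁻¹ ∈ polySeq H (l₁ + l₂ + 1) (t₁ + t₂ + 1) := by
    refine (Subgroup.mem_normalizer_iff.mp
      (hnorm (polySeq_anti (Nat.zero_le _) (Nat.zero_le _) hx)) _).mp ?_
    rw [show t₁ + t₂ + 1 = t₁ + 1 + t₂ by omega]
    exact ih₁ (Subgroup.commutator_mem_commutator hu hyv_mem)
  have hE' : y * ⁅x, v⁆ * y⁻¹ ∈ polySeq H (l₁ + l₂ + 1) (t₁ + t₂ + 1) :=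
    (Subgroup.mem_normalizer_iff.mp
      (hnorm (polySeq_anti (Nat.zero_le _) (Nat.zero_le _) hy)) _).mp
      (ih₂ (Subgroup.commutator_mem_commutator hx hv))
  refine hP.mem_of_succ_eq hE hE' ?_ (by omega) fun n => ?_
  · exact Subgroup.commutator_lowerCentralSeries_le l₁ l₂
      (Subgroup.commutator_mem_commutator (pow_mem hh₁ _) (pow_mem hh₂ _))
  · show ⁅x (n + 1), y (n + 1)⁆ = _
    rw [hxu, hyv, commutatorElement_mul_mul]
    rfl

theorem CommutatorBound.of_succ {s : ℕ} (hC : CommutatorBound H (s + 1))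
    (hP : PartialProdBound H (s + 1)) : CommutatorBound H s := by
  intro l₁ l₂ t₁ t₂ hs
  rcases hs.eq_or_lt with rfl | hlt
  swap; · exact hC _ _ _ _ hlt
  -- Downward induction on `t₁ + t₂`: generators of the exact levels `l₁`, `l₂` force
  -- `t₁ + t₂ ≤ l₁ + l₂ + 2`.
  induction hd : l₁ + l₂ + 3 - (t₁ + t₂) using Nat.strong_induction_on generalizing t₁ t₂ with
  | _ d ih =>
  refine Subgroup.commutator_closure_le_s14 (hC.polySeq_le_normalizer _ l₁ t₁)
    (hC.polySeq_le_normalizer _ l₂ t₂) ?_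
  rintro _ ⟨m₁, i, h₁, hh₁, hm₁, hi, rfl⟩ _ ⟨m₂, j, h₂, hh₂, hm₂, hj, rfl⟩
  by_cases hexact : m₁ = l₁ ∧ m₂ = l₂
  · obtain ⟨rfl, rfl⟩ := hexact
    exact commutator_binomialPow_mem hP hC (ih _ (by omega) _ _ rfl) (ih _ (by omega) _ _ rfl)
      hh₁ hh₂ hi hj
  · exact polySeq_anti (by omega) le_rfl (hC m₁ m₂ t₁ t₂ (by omega)
      (Subgroup.commutator_mem_commutator (binomialPow_mem_polySeq hh₁ le_rfl hi)
        (binomialPow_mem_polySeq hh₂ le_rfl hj)))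

theorem PartialProdBound.of_succ {l : ℕ} (hl : 1 ≤ l) (hC : CommutatorBound H (l + 1))
    (hP : PartialProdBound H (l + 1)) : PartialProdBound H l := by
  intro l' t hl' f hf
  rcases hl'.eq_or_lt with rfl | hlt
  swap; · exact hP l' t hlt f hf
  suffices key : ∀ f ∈ polySeq H l (t + 1), ∀ w ∈ polySeq H (l + 1) (t + 1),
      partialProd (f * w) ∈ polySeq H l t by
    simpa using key f hf 1 (one_mem _)
  have step : ∀ m j (h : H), h ∈ γ m → l ≤ m → j + (t + 1) ≤ m + 1 →
      ∀ f ∈ polySeq H l (t + 1),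
      (∀ w ∈ polySeq H (l + 1) (t + 1), partialProd (f * w) ∈ polySeq H l t) →
      ∀ w ∈ polySeq H (l + 1) (t + 1),
        partialProd (binomialPow h j * f * w) ∈ polySeq H l t := by
    intro m j h hh hm hj f hf ihf w hw
    obtain ⟨u, hu, hSu⟩ := exists_binomialPow_succ_eq (j := j + 1) (t := t) hh le_rfl (by omega)
    set S := binomialPow h (j + 1)
    have hS : S ∈ polySeq H l t := binomialPow_mem_polySeq hh hm (by omega)
    have hSu_mem : S * u ∈ polySeq H m t :=
      mul_mem (binomialPow_mem_polySeq hh le_rfl (by omega)) (polySeq_anti le_rfl t.le_succ hu)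
    -- Moving the factor `S (n + 1)` of the partial product past `f n * w n` turns `w` into
    -- `w'`, which is one level deeper.
    set w' := ⁅f⁻¹, S * u⁆ * (S * u * w * (S * u)⁻¹)
    have hw' : w' ∈ polySeq H (l + 1) (t + 1) :=
      mul_mem (polySeq_anti (by omega) (by omega) (hC l m (t + 1) t (by omega)
          (Subgroup.commutator_mem_commutator (inv_mem hf) hSu_mem)))
        ((Subgroup.mem_normalizer_iff.mp
          (hC.polySeq_le_normalizer (t + 1) m t hSu_mem) w).mp hw)
    have htel : partialProd (binomialPow h j * f * w) = partialProd (f * w') * S := by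
      funext n
      rw [mul_assoc, partialProd_mul, partialProd_binomialPow]
      congr 2
      funext k
      simp only [w', Pi.mul_apply, Pi.inv_apply, commutatorElement_def,
        show ∀ n, binomialPow h (j + 1) (n + 1) = S n * u n from hSu]
      group
    rw [htel]
    exact mul_mem (ihf w' hw') hS
  intro f hf
  induction hf using Subgroup.closure_induction_left with
  | one =>
    intro w hw
    rw [one_mul]
    exact polySeq_anti l.le_succ le_rfl (hP (l + 1) t le_rfl w hw)
  | mul_left g hg f hf ih =>
    obtain ⟨m, j, h, hh, hm, hj, rfl⟩ := hg
    exact step m j h hh hm hj f hf ih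
  | inv_mul_cancel g hg f hf ih =>
    obtain ⟨m, j, h, hh, hm, hj, rfl⟩ := hg
    rw [binomialPow_inv]
    exact step m j h⁻¹ (inv_mem hh) hm hj f hf ih

theorem commutatorBound_zero_and_partialProdBound_one {c : ℕ} (hc : γ c = (⊥ : Subgroup H)) :
    CommutatorBound H 0 ∧ PartialProdBound H 1 := by
  -- Above level `2 * c` one factor of every commutator lies in `polySeq H c _ = ⊥`.
  have top : CommutatorBound H (2 * c) ∧ PartialProdBound H (2 * c + 1) := by
    refine ⟨fun l₁ l₂ t₁ t₂ hl => ?_, fun l t hl f hf => ?_⟩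
    · rcases le_or_gt c l₁ with h | h
      · rw [polySeq_eq_bot hc h, Subgroup.commutator_bot_left]; exact bot_le
      · rw [polySeq_eq_bot hc (by omega : c ≤ l₂), Subgroup.commutator_bot_right]; exact bot_le
    · rw [polySeq_eq_bot hc (by omega)] at hf ⊢
      rw [Subgroup.mem_bot.mp hf, partialProd_one]
      exact one_mem _
  exact Nat.decreasingInduction
    (motive := fun L _ => CommutatorBound H L ∧ PartialProdBound H (L + 1))
    (fun L _ ⟨hC, hP⟩ =>
      have hP' := hP.of_succ (by omega) (hC.mono L.succ.le_succ)
      ⟨hC.of_succ hP', hP'⟩)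
    top (Nat.zero_le (2 * c))

theorem exists_polySeq_mul_pow_eq [Group.IsNilpotent H] (a b : H) :
    ∃ F ∈ polySeq H 1 0, ∀ n : ℕ, (a * b) ^ n = F n * a ^ n * b ^ n := by
  obtain ⟨c, hc⟩ := Subgroup.nilpotent_iff_lowerCentralSeries.mp ‹_›
  obtain ⟨hC, hP⟩ := commutatorBound_zero_and_partialProdBound_one hc
  set E : ℕ → H := binomialPow a 1 * ⁅binomialPow b 1, fun _ => a⁆ * (binomialPow a 1)⁻¹
  have hE : E ∈ polySeq H 1 1 :=
    (Subgroup.mem_normalizer_iff.mp ((hC.mono zero_le_one).polySeq_le_normalizer 1 0 0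
      (binomialPow_mem_polySeq (show a ∈ γ 0 from Subgroup.mem_top a) le_rfl le_rfl)) _).mp
      (hC 0 0 0 1 le_rfl (Subgroup.commutator_mem_commutator
        (binomialPow_mem_polySeq (show b ∈ γ 0 from Subgroup.mem_top b) le_rfl le_rfl)
        (const_mem_polySeq (show a ∈ γ 0 from Subgroup.mem_top a) le_rfl le_rfl)))
  refine ⟨partialProd E, hP 1 0 le_rfl E hE, fun n => ?_⟩
  induction n with
  | zero => simp
  | succ n ih =>
    rw [pow_succ, ih, partialProd_succ]
    simp only [E, binomialPow, Pi.mul_apply, Pi.inv_apply, Nat.choose_one_right,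
      commutatorElement_def]
    group

theorem pow_choose_mem_hallSubgroup {p k m j : ℕ} (hp : p.Prime) {h : H} (hh : h ∈ γ m)
    (hm : 1 ≤ m) (hj0 : j ≠ 0) (hj : j ≤ m + 1) :
    h ^ (p ^ k).choose j ∈ hallSubgroup H p k := by
  rcases le_or_gt j (p ^ k) with hjk | hjk
  swap; · rw [Nat.choose_eq_zero_of_lt hjk, pow_zero]; exact one_mem _
  set v := j.factorization p
  have hsum := Nat.factorization_choose_prime_pow_add_factorization hp hjk hj0
  obtain ⟨c, hc⟩ : p ^ (k - v) ∣ (p ^ k).choose j := by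
    rw [show k - v = ((p ^ k).choose j).factorization p by omega]
    exact Nat.ordProj_dvd _ _
  have hlevel : h ∈ γ (if v = 0 then 1 else p ^ v - 1) := by
    refine Subgroup.lowerCentralSeries_antitone ⊤ ?_ hh
    split_ifs
    · exact hm
    · have : p ^ v ≤ j := Nat.ordProj_le p hj0
      omega
  rw [hc, pow_mul']
  exact Subgroup.mem_iSup_of_mem v (Subgroup.mem_iSup_of_mem (Finset.mem_range.mpr (by omega))
    (Subgroup.subset_closure ⟨h ^ c, pow_mem hlevel c, rfl⟩))

theorem apply_prime_pow_mem_hallSubgroup {p k : ℕ} (hp : p.Prime) {f : ℕ → H}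
    (hf : f ∈ polySeq H 1 0) (h0 : f 0 = 1) : f (p ^ k) ∈ hallSubgroup H p k := by
  -- Modulo `hallSubgroup H p k`, every generator takes the same value at `p ^ k` as at `0`.
  let π := QuotientGroup.mk' (hallSubgroup H p k)
  have heq : Set.EqOn (π.comp (Pi.evalMonoidHom _ (p ^ k))) (π.comp (Pi.evalMonoidHom _ 0))
      (polySeq H 1 0 : Set (ℕ → H)) := by
    refine MonoidHom.eqOn_closure ?_
    rintro _ ⟨m, j, h, hh, hm, hj, rfl⟩
    rcases Nat.eq_zero_or_pos j with rfl | hj0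
    · simp [binomialPow]
    · simp only [MonoidHom.comp_apply, Pi.evalMonoidHom_apply, binomialPow,
        Nat.choose_eq_zero_of_lt hj0, pow_zero, map_one]
      exact (QuotientGroup.eq_one_iff _).mpr
        (pow_choose_mem_hallSubgroup hp hh hm hj0.ne' (by omega))
  have := heq hf
  simp only [MonoidHom.comp_apply, Pi.evalMonoidHom_apply, h0, map_one] at this
  exact (QuotientGroup.eq_one_iff _).mp this

end HallCollection

/-- **P. Hall's collection formula (commutator form).** For elements `x, y` of a finite
`p`-group `G` and `k ≥ 0`, `[x,y]^{p^k} ≡ [x^{p^k}, y]` modulo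
`γ_2(M)^{p^k} γ_p(M)^{p^{k-1}} γ_{p²}(M)^{p^{k-2}} ⋯ γ_{p^k}(M)`, where
`M = ⟨x, [x,y]⟩` and `[x,y] = x⁻¹y⁻¹xy`.
(The `i`-th factor, `0 ≤ i ≤ k`, is `γ_2(M)^{p^k}` for `i = 0` and
`γ_{p^i}(M)^{p^{k-i}}` for `i ≥ 1`; `γ_j(M) = lowerCentralSeries M (j-1)`, and the
product of these subgroups, each normal in `M`, is their join.) -/
theorem hall_collection_formula_commutator (p : ℕ) (hp : p.Prime) (G : Type*) [Group G]
    [Finite G] (hG : IsPGroup p G) (x y : G) (k : ℕ) :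
    (comm' x y) ^ p ^ k * (comm' (x ^ p ^ k) y)⁻¹ ∈
      ⨆ i ∈ Finset.range (k + 1),
        spow (Subgroup.map (Subgroup.closure {x, comm' x y}).subtype
            (Subgroup.lowerCentralSeries (⊤ : Subgroup ↥(Subgroup.closure {x, comm' x y}))
              (if i = 0 then 1 else p ^ i - 1)))
          (p ^ (k - i)) := by
  have : Fact p.Prime := ⟨hp⟩
  set M := Subgroup.closure {x, comm' x y}
  have hxM : x ∈ M := Subgroup.subset_closure (Set.mem_insert _ _)
  have hcM : comm' x y ∈ M := Subgroup.subset_closure (Set.mem_insert_of_mem _ rfl)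
  have : Group.IsNilpotent M := (hG.to_subgroup M).isNilpotent
  obtain ⟨F, hF, hpow⟩ :=
    HallCollection.exists_polySeq_mul_pow_eq (⟨x, hxM⟩ : M) ⟨comm' x y, hcM⟩
  have hF0 : F 0 = 1 := by simpa using (hpow 0).symm
  have hval : (x * comm' x y) ^ p ^ k = F (p ^ k) * x ^ p ^ k * comm' x y ^ p ^ k := by
    simpa using congrArg Subtype.val (hpow (p ^ k))
  have hmem := Subgroup.Normal.conj_mem inferInstance _
    (inv_mem (HallCollection.apply_prime_pow_mem_hallSubgroup (k := k) hp hF hF0))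
    (⟨x, hxM⟩ ^ p ^ k)⁻¹
  convert map_hallSubgroup_le M.subtype p k (Subgroup.mem_map_of_mem _ hmem) using 1
  simp only [Subgroup.subtype_apply, Subgroup.coe_mul, Subgroup.coe_inv, Subgroup.coe_pow,
    comm'_pow_left, hval]
  group
end
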